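/- arXiv:2504.12932 — 7 statements merged into one kernel-verified Lean document; each statement's English description precedes it below -/
import Mathlib

section
/- The invariant θ is preserved by generalized cospectrality: if H is an n-vertex graph generalized cospectral with an n-vertex graph G, then θ(H) = θ(G). -/
open Polynomial Matrix BigOperators

/-- The all-ones matrix J. -/
def Jmat (n : ℕ) : Matrix (Fin n) (Fin n) ℤ := Matrix.of fun _ _ => 1

/-- The adjacency matrix of a graph, over ℤ. -/
def adjMat {n : ℕ} (G : SimpleGraph (Fin n)) [DecidableRel G.Adj] : Matrix (Fin n) (Fin n) ℤ :=
  G.adjMatrix ℤ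

/-- The walk matrix W(G) = [e, Ae, …, A^{n-1}e] (column j is A^j e). -/
def walkMat {n : ℕ} (G : SimpleGraph (Fin n)) [DecidableRel G.Adj] : Matrix (Fin n) (Fin n) ℤ :=
  Matrix.of fun i j => ((adjMat G ^ (j : ℕ)) *ᵥ fun _ => (1 : ℤ)) i

lemma adjMatR_isHermitian {n : ℕ} (G : SimpleGraph (Fin n)) [DecidableRel G.Adj] :
    (G.adjMatrix ℝ).IsHermitian := by
  unfold Matrix.IsHermitian
  ext i j
  simp [Matrix.conjTranspose_apply, SimpleGraph.adjMatrix_apply, G.adj_comm i j]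

/-- The (real) eigenvalues α_1, …, α_n of the adjacency matrix of a graph. -/
noncomputable def graphEig {n : ℕ} (G : SimpleGraph (Fin n)) [DecidableRel G.Adj] : Fin n → ℝ :=
  (adjMatR_isHermitian G).eigenvalues

/-- The discriminant Δ(G) = ∏_{i>j} (α_i - α_j)^2; it is an integer, so we may recover it
from the real product by taking the floor. -/
noncomputable def discG {n : ℕ} (G : SimpleGraph (Fin n)) [DecidableRel G.Adj] : ℤ :=
  ⌊∏ i : Fin n, ∏ j : Fin n,
      if (j : ℕ) < (i : ℕ) then (graphEig G i - graphEig G j) ^ 2 else 1⌋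

/-- θ(G) = gcd(2^{-⌊n/2⌋}·det W(G), Δ(G)).  (Here `det W / 2 ^ (n / 2)` is integer division,
which agrees with exact division since 2^⌊n/2⌋ always divides det W.) -/
noncomputable def thetaG {n : ℕ} (G : SimpleGraph (Fin n)) [DecidableRel G.Adj] : ℕ :=
  Int.gcd ((walkMat G).det / 2 ^ (n / 2)) (discG G)

/-- Two graphs are generalized cospectral if A and A+J of the two graphs have, respectively,
the same characteristic polynomials. -/
def genCospectral {n : ℕ} (G H : SimpleGraph (Fin n)) [DecidableRel G.Adj]
    [DecidableRel H.Adj] : Prop :=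
  (adjMat G).charpoly = (adjMat H).charpoly ∧
    (adjMat G + Jmat n).charpoly = (adjMat H + Jmat n).charpoly

/-- G is determined by its generalized spectrum (DGS). -/
def IsDGS {n : ℕ} (G : SimpleGraph (Fin n)) [DecidableRel G.Adj] : Prop :=
  ∀ (H : SimpleGraph (Fin n)) [DecidableRel H.Adj], genCospectral G H → Nonempty (G ≃g H)

/-! The discriminant depends only on the spectrum of `A`. The Gram matrix `WᵀW` has entries
`eᵀ A^(j+k) e`, and these walk counts are determined by the generalized spectrum: over `ℤ⟦t⟧` the
matrix determinant lemma gives `det (1 - t (A + J)) = det (1 - t A) * (1 - t ∑ₘ (eᵀ Aᵐ e) tᵐ)`,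
and `det (1 - t A)` is an invertible power series. Hence `det W(H) = ± det W(G)`. The sign does
not affect `θ` because `2 ^ ⌊n/2⌋` divides `det W`: the walk counts `eᵀ Aᵐ e` with `m ≥ 1` are
even, so `2 ^ (n - 1)` divides `det (WᵀW) = (det W)²`. -/

open scoped PowerSeries

namespace Matrix

section Symm

variable {R ι : Type*} [CommRing R] [Fintype ι]

theorem IsSymm.pow_mulVec_dotProduct_pow_mulVec [DecidableEq ι] {A : Matrix ι ι R}
    (hA : A.IsSymm) (j k : ℕ) (u w : ι → R) :
    (A ^ j *ᵥ u) ⬝ᵥ (A ^ k *ᵥ w) = u ⬝ᵥ A ^ (j + k) *ᵥ w := by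
  rw [← vecMul_transpose, (hA.pow j).eq, ← dotProduct_mulVec, mulVec_mulVec, pow_add]

theorem IsSymm.two_dvd_dotProduct_mulVec_self [LinearOrder ι] {A : Matrix ι ι R}
    (hA : A.IsSymm) (hdiag : A.diag = 0) (x : ι → R) : 2 ∣ x ⬝ᵥ A *ᵥ x := by
  set U : Matrix ι ι R := of fun i j => if i < j then A i j else 0
  have hU : A = U + Uᵀ := by
    ext i j
    rcases lt_trichotomy i j with hij | rfl | hij
    · simp [U, hij, hij.not_gt]
    · simpa [U] using congrFun hdiag i
    · simp [U, hij, hij.not_gt, ← hA.apply i j]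
  refine ⟨x ⬝ᵥ U *ᵥ x, ?_⟩
  rw [hU, add_mulVec, dotProduct_add, mulVec_transpose, dotProduct_comm x (x ᵥ* U),
    ← dotProduct_mulVec, two_mul]

theorem IsSymm.two_dvd_one_dotProduct_pow_mulVec_one [LinearOrder ι]
    {A : Matrix ι ι ℤ} (hA : A.IsSymm) (hdiag : A.diag = 0) {m : ℕ} (hm : 1 ≤ m) :
    2 ∣ 1 ⬝ᵥ A ^ m *ᵥ 1 := by
  induction m using Nat.strong_induction_on with
  | _ m ih =>
  obtain ⟨k, rfl | rfl⟩ := Nat.even_or_odd' m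
  · set x := A ^ k *ᵥ 1
    have hsq : 1 ⬝ᵥ A ^ (2 * k) *ᵥ 1 = x ⬝ᵥ x := by
      rw [hA.pow_mulVec_dotProduct_pow_mulVec, two_mul]
    have hx : 2 ∣ x ⬝ᵥ x - 1 ⬝ᵥ x := by
      rw [← sub_dotProduct]
      exact Finset.dvd_sum fun i _ => by
        simpa [sub_mul, mul_sub] using (Int.even_mul_pred_self (x i)).two_dvd
    have hk : 2 ∣ 1 ⬝ᵥ x := ih k (by omega) (by omega)
    rw [hsq, ← sub_add_cancel (x ⬝ᵥ x) (1 ⬝ᵥ x)]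
    exact dvd_add hx hk
  · rw [two_mul, add_assoc, ← hA.pow_mulVec_dotProduct_pow_mulVec, pow_succ', ← mulVec_mulVec]
    exact hA.two_dvd_dotProduct_mulVec_self hdiag _

end Symm

theorem pow_card_sub_one_dvd_det {R ι : Type*} [CommRing R] [Fintype ι] [DecidableEq ι]
    {M : Matrix ι ι R} {a : R} (j₀ : ι) (h : ∀ i j, j ≠ j₀ → a ∣ M i j) :
    a ^ (Fintype.card ι - 1) ∣ M.det := by
  rw [det_apply]
  refine Finset.dvd_sum fun σ _ => ?_
  rw [Units.smul_def, zsmul_eq_mul]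
  refine Dvd.dvd.mul_left (Dvd.dvd.trans ?_ (Finset.prod_dvd_prod_of_subset
    (Finset.univ.erase j₀) Finset.univ _ (Finset.subset_univ _))) _
  rw [← Finset.card_univ, ← Finset.card_erase_of_mem (Finset.mem_univ j₀), ← Finset.prod_const]
  exact Finset.prod_dvd_prod_of_dvd _ _ fun j hj => h _ _ (Finset.ne_of_mem_erase hj)

section PowerSeries

variable {R ι : Type*} [CommRing R] [Fintype ι] [DecidableEq ι]

noncomputable def walkSeries (A : Matrix ι ι R) (u v : ι → R) : R⟦X⟧ :=
  PowerSeries.mk fun m => v ⬝ᵥ A ^ m *ᵥ u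

theorem det_one_sub_X_smul_map_C (A : Matrix ι ι R) :
    (1 - (PowerSeries.X : R⟦X⟧) • A.map PowerSeries.C).det = A.charpolyRev := by
  rw [charpolyRev, ← Polynomial.coeToPowerSeries.ringHom_apply, RingHom.map_det]
  congr 1
  ext i j : 1
  by_cases hij : i = j <;> simp [hij, mul_comm PowerSeries.X]

theorem isUnit_coe_charpolyRev (A : Matrix ι ι R) : IsUnit (A.charpolyRev : R⟦X⟧) := by
  rw [PowerSeries.isUnit_iff_constantCoeff, ← PowerSeries.coeff_zero_eq_constantCoeff_apply,
    Polynomial.coeff_coe, Polynomial.coeff_zero_eq_eval_zero, eval_charpolyRev]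
  exact isUnit_one

theorem one_sub_X_smul_map_C_mulVec_mk (A : Matrix ι ι R) (u : ι → R) :
    (1 - (PowerSeries.X : R⟦X⟧) • A.map PowerSeries.C) *ᵥ
        (fun i => PowerSeries.mk fun m => (A ^ m *ᵥ u) i) = PowerSeries.C ∘ u := by
  ext i m
  rw [sub_mulVec, one_mulVec, smul_mulVec]
  cases m with
  | zero => simp
  | succ m =>
    simp [PowerSeries.coeff_succ_X_mul, mulVec, dotProduct, map_sum, pow_succ', Matrix.mul_apply,
      Finset.sum_mul, Finset.mul_sum, mul_assoc]
    rw [sub_eq_zero, Finset.sum_comm]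

theorem charpolyRev_add_vecMulVec (A : Matrix ι ι R) (u v : ι → R) :
    ((A + vecMulVec u v).charpolyRev : R⟦X⟧)
      = (A.charpolyRev : R⟦X⟧) * (1 - PowerSeries.X * A.walkSeries u v) := by
  set N := 1 - (PowerSeries.X : R⟦X⟧) • A.map PowerSeries.C
  have hN : IsUnit N.det := det_one_sub_X_smul_map_C A ▸ isUnit_coe_charpolyRev A
  have hsplit : 1 - (PowerSeries.X : R⟦X⟧) • (A + vecMulVec u v).map PowerSeries.C
      = N + vecMulVec (-(PowerSeries.X : R⟦X⟧) • (PowerSeries.C ∘ u)) (PowerSeries.C ∘ v) := by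
    ext i j : 1
    simp [N, vecMulVec_apply]
    ring
  have hinv : N⁻¹ *ᵥ (PowerSeries.C ∘ u) = fun i => PowerSeries.mk fun m => (A ^ m *ᵥ u) i :=
    have := invertibleOfIsUnitDet N hN
    inv_mulVec_eq_vec (one_sub_X_smul_map_C_mulVec_mk A u).symm
  have hdot : (PowerSeries.C ∘ v) ⬝ᵥ (fun i => PowerSeries.mk fun m => (A ^ m *ᵥ u) i)
      = A.walkSeries u v := by
    ext m
    simp [walkSeries, dotProduct, map_sum, PowerSeries.coeff_C_mul]
  rw [← det_one_sub_X_smul_map_C, ← det_one_sub_X_smul_map_C, hsplit, vecMulVec_eq Unit,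
    det_add_replicateCol_mul_replicateRow hN]
  congr 1
  rw [Matrix.mul_assoc, ← replicateCol_mulVec, det_unique, add_apply, one_apply_eq,
    replicateRow_mul_replicateCol_apply, mulVec_smul, hinv, dotProduct_smul, hdot, smul_eq_mul,
    neg_mul, ← sub_eq_add_neg]

theorem dotProduct_pow_mulVec_eq_of_charpoly_eq {A B : Matrix ι ι R} {u v : ι → R}
    (h₀ : A.charpoly = B.charpoly)
    (h₁ : (A + vecMulVec u v).charpoly = (B + vecMulVec u v).charpoly) (m : ℕ) :
    v ⬝ᵥ A ^ m *ᵥ u = v ⬝ᵥ B ^ m *ᵥ u := by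
  have key : (A.charpolyRev : R⟦X⟧) * (1 - PowerSeries.X * A.walkSeries u v)
      = (A.charpolyRev : R⟦X⟧) * (1 - PowerSeries.X * B.walkSeries u v) := by
    rw [← charpolyRev_add_vecMulVec, ← reverse_charpoly, h₁, reverse_charpoly,
      charpolyRev_add_vecMulVec, ← reverse_charpoly, ← h₀, reverse_charpoly]
  have hseries : A.walkSeries u v = B.walkSeries u v :=
    PowerSeries.X_mul_cancel <| sub_right_injective <|
      (isUnit_coe_charpolyRev A).mul_left_cancel key
  simpa [walkSeries] using congrArg (PowerSeries.coeff m) hseries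

end PowerSeries

end Matrix

theorem Int.pow_half_dvd_of_pow_dvd_mul_self {p : ℕ} [Fact p.Prime] {d : ℤ} {k : ℕ}
    (h : (p : ℤ) ^ k ∣ d * d) : (p : ℤ) ^ ((k + 1) / 2) ∣ d := by
  rcases eq_or_ne d 0 with rfl | hd
  · exact dvd_zero _
  obtain h | h := (padicValInt_dvd_iff k (d * d)).1 h
  · exact absurd h (mul_ne_zero hd hd)
  rw [padicValInt.mul hd hd] at h
  exact (padicValInt_dvd_iff _ _).2 (Or.inr (by omega))

section Graph

variable {n : ℕ} (G H : SimpleGraph (Fin n)) [DecidableRel G.Adj] [DecidableRel H.Adj]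

theorem adjMat_isSymm : (adjMat G).IsSymm := G.isSymm_adjMatrix

theorem diag_adjMat : (adjMat G).diag = 0 := G.diag_adjMatrix ℤ

theorem map_adjMat_intCast : (adjMat G).map (Int.castRingHom ℝ) = G.adjMatrix ℝ := by
  ext i j
  by_cases h : G.Adj i j <;> simp [adjMat, h]

theorem Jmat_eq_vecMulVec : Jmat n = vecMulVec 1 1 := by
  ext
  simp [Jmat, vecMulVec_apply]

theorem walkMat_transpose_mul_self :
    (walkMat G)ᵀ * walkMat G = of fun j k : Fin n => 1 ⬝ᵥ adjMat G ^ (j + k : ℕ) *ᵥ 1 :=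
  ext fun j k => (adjMat_isSymm G).pow_mulVec_dotProduct_pow_mulVec j k 1 1

theorem two_pow_dvd_det_walkMat : (2 : ℤ) ^ (n / 2) ∣ (walkMat G).det := by
  have hgram : (2 : ℤ) ^ (n - 1) ∣ ((walkMat G)ᵀ * walkMat G).det := by
    rcases n with _ | n
    · simp
    rw [walkMat_transpose_mul_self, show n + 1 - 1 = Fintype.card (Fin (n + 1)) - 1 by simp]
    exact pow_card_sub_one_dvd_det 0 fun j k hk =>
      (adjMat_isSymm G).two_dvd_one_dotProduct_pow_mulVec_one (diag_adjMat G)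
        (by have := Fin.pos_iff_ne_zero.2 hk; omega)
  rw [det_mul, det_transpose] at hgram
  have := Int.pow_half_dvd_of_pow_dvd_mul_self (p := 2) hgram
  rwa [show (n - 1 + 1) / 2 = n / 2 by omega] at this

theorem discG_eq_of_charpoly_eq (h : (adjMat G).charpoly = (adjMat H).charpoly) :
    discG G = discG H := by
  have : graphEig G = graphEig H := by
    rw [graphEig, graphEig, IsHermitian.eigenvalues_eq_eigenvalues_iff, ← map_adjMat_intCast,
      ← map_adjMat_intCast, charpoly_map, charpoly_map, h]
  rw [discG, discG, this]

variable {G H}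

theorem genCospectral.one_dotProduct_pow_mulVec_one_eq (h : genCospectral G H) (m : ℕ) :
    1 ⬝ᵥ adjMat G ^ m *ᵥ 1 = 1 ⬝ᵥ adjMat H ^ m *ᵥ 1 :=
  dotProduct_pow_mulVec_eq_of_charpoly_eq h.1 (by simpa [Jmat_eq_vecMulVec] using h.2) m

theorem genCospectral.det_walkMat_eq_or_eq_neg (h : genCospectral G H) :
    (walkMat H).det = (walkMat G).det ∨ (walkMat H).det = -(walkMat G).det := by
  have hgram : (walkMat H)ᵀ * walkMat H = (walkMat G)ᵀ * walkMat G := by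
    simp_rw [walkMat_transpose_mul_self, h.one_dotProduct_pow_mulVec_one_eq]
  apply mul_self_eq_mul_self_iff.1
  simpa using congrArg det hgram

end Graph

/-- **Remark.** θ is invariant under generalized cospectrality. -/
theorem thetaG_eq_of_genCospectral {n : ℕ} (G H : SimpleGraph (Fin n)) [DecidableRel G.Adj]
    [DecidableRel H.Adj] (h : genCospectral G H) :
    thetaG H = thetaG G := by
  rw [thetaG, thetaG, discG_eq_of_charpoly_eq G H h.1]
  rcases h.det_walkMat_eq_or_eq_neg with hdet | hdet <;> rw [hdet]
  rw [Int.neg_ediv_of_dvd (two_pow_dvd_det_walkMat G), Int.neg_gcd]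
end

section
/- If A is symmetric (A^T = A), then for each i ∈ {1,…,k}, the orthogonal space V_i^⊥ equals the direct sum ⊕_{j≠i} V_j of the remaining primary components. -/
open Polynomial Matrix BigOperators

/-! Every polynomial in a symmetric matrix `A` is symmetric, so if `a P + b Q = 1`, `P(A) v = 0` and
`Q(A) u = 0`, then `v ⬝ u = v ⬝ P(A) a(A) u = (P(A) v) ⬝ a(A) u = 0`. For `P = φᵢ^rᵢ` and
`Q = ∏_{j ≠ i} φⱼ^rⱼ`, Cayley–Hamilton makes `ker P(A)` and `ker Q(A) = ⊕_{j ≠ i} Vⱼ` complementary;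
hence `ker Q(A) ⊆ Vᵢ^⊥`, and both have dimension `n - dim Vᵢ`. -/

/-- The orthogonal space V^⟂ = {u : v ⬝ᵥ u = 0 for all v ∈ V} with respect to the standard
bilinear form ⟨u,v⟩ = uᵀv on F_p^n. -/
def orthC {p n : ℕ} (V : Submodule (ZMod p) (Fin n → ZMod p)) :
    Submodule (ZMod p) (Fin n → ZMod p) where
  carrier := {u | ∀ v ∈ V, v ⬝ᵥ u = 0}
  add_mem' := by
    intro a b ha hb v hv
    simp [dotProduct_add, ha v hv, hb v hv]
  zero_mem' := by
    intro v hv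
    simp
  smul_mem' := by
    intro c a ha v hv
    simp [dotProduct_smul, ha v hv]

namespace Polynomial

variable {R M : Type*} [CommRing R] [AddCommGroup M] [Module R M]

theorem isCompl_ker_aeval_of_isCoprime {f : Module.End R M} {P Q : R[X]} (hPQ : IsCoprime P Q)
    (hf : aeval f (P * Q) = 0) :
    IsCompl (LinearMap.ker (aeval f P)) (LinearMap.ker (aeval f Q)) :=
  ⟨disjoint_ker_aeval_of_isCoprime f hPQ, codisjoint_iff.2 <| by
    rw [sup_ker_aeval_eq_ker_aeval_mul_of_coprime f hPQ, hf, LinearMap.ker_zero]⟩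

theorem ker_aeval_prod_eq_iSup_of_pairwise {ι : Type*} (f : Module.End R M) (g : ι → R[X])
    (s : Finset ι) (hg : (s : Set ι).Pairwise fun i j => IsCoprime (g i) (g j)) :
    LinearMap.ker (aeval f (∏ j ∈ s, g j)) = ⨆ j ∈ s, LinearMap.ker (aeval f (g j)) := by
  classical
  induction s using Finset.induction_on with
  | empty => simp [Module.End.one_eq_id]
  | @insert a s ha ih =>
    rw [Finset.coe_insert, Set.pairwise_insert] at hg
    have hc : IsCoprime (g a) (∏ j ∈ s, g j) :=
      IsCoprime.prod_right fun j hj => (hg.2 j hj (ne_of_mem_of_not_mem hj ha).symm).1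
    rw [Finset.prod_insert ha, ← sup_ker_aeval_eq_ker_aeval_mul_of_coprime f hc, ih hg.1,
      Finset.iSup_insert]

theorem isCoprime_pow_of_monic_of_irreducible {K : Type*} [Field K] {φ ψ : K[X]}
    (hφ : φ.Monic) (hψ : ψ.Monic) (hφi : Irreducible φ) (hψi : Irreducible ψ) (hne : φ ≠ ψ)
    (a b : ℕ) : IsCoprime (φ ^ a) (ψ ^ b) :=
  IsCoprime.pow <| (hφi.coprime_iff_not_dvd).2 fun hdvd =>
    hne (eq_of_monic_of_associated hφ hψ (hφi.associated_of_dvd hψi hdvd))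

end Polynomial

namespace Matrix

variable {R : Type*} [CommRing R] {m : Type*} [Fintype m] [DecidableEq m]

theorem toLin'_aeval (A : Matrix m m R) (q : R[X]) :
    toLin' (aeval A q) = aeval (toLin' A) q :=
  (aeval_algHom_apply (toLinAlgEquiv' : Matrix m m R ≃ₐ[R] _).toAlgHom A q).symm

theorem IsSymm.aeval {A : Matrix m m R} (hA : A.IsSymm) (q : R[X]) : (aeval A q).IsSymm := by
  induction q using Polynomial.induction_on' with
  | add f g hf hg => simpa only [map_add] using hf.add hg
  | monomial k c =>
    simpa only [aeval_monomial, Algebra.algebraMap_eq_smul_one, smul_mul, one_mul] using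
      (hA.pow k).smul c

theorem dotProduct_eq_zero_of_isSymm_of_isCoprime {A : Matrix m m R} (hA : A.IsSymm) {P Q : R[X]}
    (hPQ : IsCoprime P Q) {u v : m → R} (hv : aeval A P *ᵥ v = 0) (hu : aeval A Q *ᵥ u = 0) :
    v ⬝ᵥ u = 0 := by
  obtain ⟨a, b, hab⟩ := hPQ
  have hu' : u = aeval A P *ᵥ aeval A a *ᵥ u := by
    calc u = aeval A (P * a + b * Q) *ᵥ u := by rw [mul_comm P, hab, map_one, one_mulVec]
      _ = aeval A P *ᵥ aeval A a *ᵥ u := by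
        simp only [map_add, map_mul, add_mulVec, ← mulVec_mulVec, hu, mulVec_zero, add_zero]
  rw [hu', dotProduct_mulVec, ← mulVec_transpose, (hA.aeval P).eq, hv, zero_dotProduct]

end Matrix

theorem finrank_orthC {p n : ℕ} [Fact p.Prime] (V : Submodule (ZMod p) (Fin n → ZMod p)) :
    Module.finrank (ZMod p) (orthC V) = n - Module.finrank (ZMod p) V := by
  have h : orthC V = (toBilin' (1 : Matrix (Fin n) (Fin n) (ZMod p))).orthogonal V := by
    ext u
    simp [orthC, toBilin'_apply']
  rw [h, LinearMap.BilinForm.finrank_orthogonal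
    (nondegenerate_of_det_ne_zero (by simp)).toBilin', Module.finrank_fin_fun]

theorem orth_primary_component_eq_supr_general {p n k : ℕ} (hp : p.Prime)
    (A : Matrix (Fin n) (Fin n) (ZMod p)) (hA : Aᵀ = A)
    (φ : Fin k → Polynomial (ZMod p)) (r : Fin k → ℕ)
    (hmon : ∀ i, (φ i).Monic) (hirr : ∀ i, Irreducible (φ i))
    (hinj : Function.Injective φ)
    (hchar : A.charpoly = ∏ i, φ i ^ r i) (i : Fin k) :
    orthC (LinearMap.ker (Matrix.toLin' (Polynomial.aeval A (φ i ^ r i)))) =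
      ⨆ (j : Fin k) (_ : j ≠ i),
        LinearMap.ker (Matrix.toLin' (Polynomial.aeval A (φ j ^ r j))) := by
  have := Fact.mk hp
  have hcop : Pairwise fun j l => IsCoprime (φ j ^ r j) (φ l ^ r l) := fun j l hjl =>
    isCoprime_pow_of_monic_of_irreducible (hmon j) (hmon l) (hirr j) (hirr l) (hinj.ne hjl) _ _
  set P := φ i ^ r i
  set Q := ∏ j ∈ Finset.univ.erase i, φ j ^ r j
  have hPQ : IsCoprime P Q :=
    IsCoprime.prod_right fun j hj => hcop (Finset.ne_of_mem_erase hj).symm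
  have hRHS : (⨆ (j : Fin k) (_ : j ≠ i), LinearMap.ker (toLin' (aeval A (φ j ^ r j)))) =
      LinearMap.ker (aeval (toLin' A) Q) := by
    rw [ker_aeval_prod_eq_iSup_of_pairwise _ _ _ fun j _ l _ hjl => hcop hjl]
    simp only [Finset.mem_erase, Finset.mem_univ, and_true, toLin'_aeval]
  have hcompl :
      IsCompl (LinearMap.ker (aeval (toLin' A) P)) (LinearMap.ker (aeval (toLin' A) Q)) :=
    isCompl_ker_aeval_of_isCoprime hPQ <| by
      rw [Finset.mul_prod_erase _ (fun j => φ j ^ r j) (Finset.mem_univ i), ← hchar,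
        ← toLin'_aeval, aeval_self_charpoly, map_zero]
  have hle : LinearMap.ker (aeval (toLin' A) Q) ≤ orthC (LinearMap.ker (toLin' (aeval A P))) :=
    fun u hu v hv => dotProduct_eq_zero_of_isSymm_of_isCoprime hA hPQ hv
      (by rwa [LinearMap.mem_ker, ← toLin'_aeval, toLin'_apply] at hu)
  rw [hRHS]
  refine (Submodule.eq_of_le_of_finrank_le hle ?_).symm
  have hdim := Submodule.finrank_add_eq_of_isCompl hcompl
  rw [Module.finrank_fin_fun] at hdim
  rw [finrank_orthC, toLin'_aeval]
  omega

/-- **Lemma.** Primary decomposition setting: p prime, A an n×n matrix over F_p with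
χ(A;x) = φ_1^{r_1} ⋯ φ_k^{r_k} (distinct monic irreducibles φ_i, r_i ≥ 1),
V_i = ker φ_i^{r_i}(A).  If A is symmetric, then V_i^⟂ = ⊕_{j ≠ i} V_j. -/
theorem orth_primary_component_eq_supr {p n k : ℕ} (hp : p.Prime)
    (A : Matrix (Fin n) (Fin n) (ZMod p)) (hA : Aᵀ = A)
    (φ : Fin k → Polynomial (ZMod p)) (r : Fin k → ℕ)
    (hmon : ∀ i, (φ i).Monic) (hirr : ∀ i, Irreducible (φ i))
    (hinj : Function.Injective φ) (hr : ∀ i, 1 ≤ r i)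
    (hchar : A.charpoly = ∏ i, φ i ^ r i) (i : Fin k) :
    orthC (LinearMap.ker (Matrix.toLin' (Polynomial.aeval A (φ i ^ r i)))) =
      ⨆ (j : Fin k) (_ : j ≠ i),
        LinearMap.ker (Matrix.toLin' (Polynomial.aeval A (φ j ^ r j))) :=
  orth_primary_component_eq_supr_general hp A hA φ r hmon hirr hinj hchar i
end

section
/- Let A be symmetric (A^T = A) and U a totally isotropic A-invariant subspace of F_p^n. Then U = ⊕_{i : r_i ≥ 2} (U ∩ V_i), the direct sum being taken over all indices i whose irreducible factor φ_i occurs with multiplicity r_i ≥ 2 in the characteristic polynomial. -/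
/-!
Write `V_i = ker φ_i^{r_i}(A)`. The `φ_i^{r_i}` are pairwise coprime and their product kills `A`
(Cayley–Hamilton), so the `V_i` are independent and every `A`-invariant subspace `U` is the sum of
the `U ∩ V_i`; it remains to show `U ∩ V_i = 0` when `r_i = 1`.

An invariant subspace killed by an irreducible `φ` has characteristic polynomial a power of `φ`,
so its dimension is a multiple of `deg φ`. As `V_i` has an invariant complement, this power of
`φ_i` divides `χ(A)`; when `r_i = 1` this gives `dim V_i ≤ deg φ_i`, so the invariant subspace
`U ∩ V_i` is either `0` or all of `V_i`. In the second case `V_i` is totally isotropic and,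
`A` being symmetric, orthogonal to every `V_j` with `j ≠ i`; so it lies in the radical of the dot
product, which is `0`.
-/

open Polynomial Module Function Matrix

theorem Polynomial.pairwise_isCoprime_pow {K ι : Type*} [Field K] {φ : ι → K[X]}
    (hmon : ∀ i, (φ i).Monic) (hirr : ∀ i, Irreducible (φ i)) (hinj : Injective φ)
    (r : ι → ℕ) : Pairwise (IsCoprime on fun i => φ i ^ r i) := fun i j hij =>
  IsCoprime.pow <| (hirr i).coprime_iff_not_dvd.2 fun h => hinj.ne hij <|
    eq_of_monic_of_associated (hmon i) (hmon j) ((hirr i).associated_of_dvd (hirr j) h)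

theorem Matrix.dvd_of_dvd_charpoly_of_aeval_eq_zero {K m : Type*} [Field K] [Fintype m]
    [DecidableEq m] (M : Matrix m m K) {π q : K[X]} (hπ : Irreducible π)
    (hπM : π ∣ M.charpoly) (hq : aeval M q = 0) : π ∣ q := by
  cases isEmpty_or_nonempty m
  · rw [charpoly_isEmpty] at hπM
    exact absurd (isUnit_of_dvd_one hπM) hπ.not_isUnit
  have := Fact.mk hπ
  -- `root π` is an eigenvalue of `M` over `AdjoinRoot π`, and spectral mapping puts
  -- `q (root π)` in the spectrum of `q M = 0`.
  set M' := M.map (algebraMap K (AdjoinRoot π))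
  have hroot : M'.charpoly.IsRoot (AdjoinRoot.root π) := by
    rw [charpoly_map]
    exact (AdjoinRoot.isRoot_root π).dvd (Polynomial.map_dvd _ hπM)
  have hq' : aeval M' q = 0 := by
    rw [show M' = (Algebra.ofId K (AdjoinRoot π)).mapMatrix M from rfl, aeval_algHom_apply, hq,
      map_zero]
  have hspec := spectrum.subset_polynomial_aeval M' (q.map (algebraMap K (AdjoinRoot π)))
    ⟨_, mem_spectrum_iff_isRoot_charpoly.2 hroot, rfl⟩
  rw [aeval_map_algebraMap, hq', spectrum.zero_eq, Set.mem_singleton_iff] at hspec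
  beta_reduce at hspec
  rwa [eval_map_algebraMap, AdjoinRoot.aeval_eq, AdjoinRoot.mk_eq_zero] at hspec

namespace LinearMap

section CommRing

variable {R M : Type*} [CommRing R] [AddCommGroup M] [Module R M] (f : Module.End R M)

theorem apply_mem_ker_aeval (q : R[X]) : ∀ x ∈ ker (aeval f q), f x ∈ ker (aeval f q) := by
  intro x hx
  have hcomm : aeval f q * f = f * aeval f q := by
    simpa only [map_mul, aeval_X] using congr_arg (aeval f) (mul_comm q X)
  rw [mem_ker, ← Module.End.mul_apply, hcomm, Module.End.mul_apply, mem_ker.1 hx, map_zero]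

theorem aeval_restrict_apply {p : Submodule R M} (hp : ∀ x ∈ p, f x ∈ p) (q : R[X]) (x : p) :
    (aeval (f.restrict hp) q x : M) = aeval f q x := by
  induction q using Polynomial.induction_on' with
  | add q₁ q₂ h₁ h₂ => simp only [map_add, add_apply, Submodule.coe_add, h₁, h₂]
  | monomial n a => simp [aeval_monomial, Module.algebraMap_end_apply, Module.End.pow_restrict _ hp]

theorem ker_aeval_restrict {p : Submodule R M} (hp : ∀ x ∈ p, f x ∈ p) (q : R[X]) :
    ker (aeval (f.restrict hp) q) = (ker (aeval f q)).comap p.subtype := by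
  ext x
  simp only [mem_ker, Submodule.mem_comap, Submodule.subtype_apply, ← aeval_restrict_apply f hp,
    ZeroMemClass.coe_eq_zero]

theorem aeval_restrict_eq_zero_of_le_ker {p : Submodule R M} (hp : ∀ x ∈ p, f x ∈ p)
    {q : R[X]} (h : p ≤ ker (aeval f q)) : aeval (f.restrict hp) q = 0 := by
  ext x
  simpa [aeval_restrict_apply] using h x.2

theorem iSup_ker_aeval_eq_ker_aeval_prod {ι : Type*} (s : Finset ι) {q : ι → R[X]}
    (hq : (s : Set ι).Pairwise (IsCoprime on q)) :
    ⨆ i ∈ s, ker (aeval f (q i)) = ker (aeval f (∏ i ∈ s, q i)) := by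
  classical
  induction s using Finset.induction_on with
  | empty => simp [Module.End.one_eq_id]
  | insert a s ha ih =>
    rw [Finset.coe_insert, Set.pairwise_insert] at hq
    rw [Finset.iSup_insert, Finset.prod_insert ha, ih hq.1,
      sup_ker_aeval_eq_ker_aeval_mul_of_coprime]
    exact IsCoprime.prod_right fun i hi => (hq.2 i hi (ne_of_mem_of_not_mem hi ha).symm).1

theorem iSup_ker_aeval_eq_top {ι : Type*} [Fintype ι] {q : ι → R[X]}
    (hq : Pairwise (IsCoprime on q)) (hf : aeval f (∏ i, q i) = 0) :
    ⨆ i, ker (aeval f (q i)) = ⊤ := by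
  simpa [hf] using iSup_ker_aeval_eq_ker_aeval_prod f Finset.univ (hq.set_pairwise _)

theorem iSupIndep_ker_aeval {ι : Type*} {q : ι → R[X]} (hq : Pairwise (IsCoprime on q)) :
    iSupIndep fun i => ker (aeval f (q i)) := by
  classical
  refine iSupIndep_iff_supIndep.2 fun s t _ i _ hit => ?_
  rw [Finset.sup_eq_iSup, iSup_ker_aeval_eq_ker_aeval_prod f t (hq.set_pairwise _)]
  exact disjoint_ker_aeval_of_isCoprime f
    (IsCoprime.prod_right fun j hj => hq (ne_of_mem_of_not_mem hj hit).symm)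

theorem iSup_inf_ker_aeval_eq {ι : Type*} [Fintype ι] {q : ι → R[X]}
    (hq : Pairwise (IsCoprime on q)) (hf : aeval f (∏ i, q i) = 0) {W : Submodule R M}
    (hW : ∀ x ∈ W, f x ∈ W) :
    ⨆ i, W ⊓ ker (aeval f (q i)) = W := by
  have htop := iSup_ker_aeval_eq_top (f.restrict hW) hq
    (aeval_restrict_eq_zero_of_le_ker f hW (by rw [hf, ker_zero]; exact le_top))
  calc ⨆ i, W ⊓ ker (aeval f (q i))
      = ⨆ i, (ker (aeval (f.restrict hW) (q i))).map W.subtype := by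
        simp only [ker_aeval_restrict, Submodule.map_comap_subtype]
    _ = W := by rw [← Submodule.map_iSup, htop, Submodule.map_subtype_top]

end CommRing

section AdjointPair

variable {R M : Type*} [CommRing R] [AddCommGroup M] [Module R M] {B : LinearMap.BilinForm R M}
  {f : Module.End R M}

theorem isAdjointPair_aeval (hf : IsAdjointPair B B f f) (q : R[X]) :
    IsAdjointPair B B (aeval f q) (aeval f q) := by
  induction q using Polynomial.induction_on' with
  | add p q hp hq => rw [map_add]; exact hp.add hq
  | monomial n a =>
    have hpow : IsAdjointPair B B ⇑(f ^ n) ⇑(f ^ n) := by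
      induction n with
      | zero => exact isAdjointPair_one
      | succ n ih => simpa only [← pow_succ, ← pow_succ'] using ih.mul hf
    rw [aeval_monomial, ← Algebra.smul_def, coe_smul]
    exact hpow.smul a

theorem IsAdjointPair.apply_eq_zero_of_isCoprime (hf : IsAdjointPair B B f f) {p q : R[X]}
    (hpq : IsCoprime p q) {x y : M} (hx : x ∈ ker (aeval f p)) (hy : y ∈ ker (aeval f q)) :
    B x y = 0 := by
  obtain ⟨a, b, hab⟩ := hpq
  have hby : aeval f (b * q) y = 0 := by rw [map_mul, Module.End.mul_apply, mem_ker.1 hy, map_zero]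
  have hy' : y = aeval f p (aeval f a y) := by
    calc y = aeval f (a * p + b * q) y := by rw [hab, map_one, Module.End.one_apply]
    _ = aeval f p (aeval f a y) := by
      rw [map_add, add_apply, hby, add_zero, mul_comm, map_mul, Module.End.mul_apply]
  rw [hy', ← isAdjointPair_aeval hf p, mem_ker.1 hx, map_zero, zero_apply]

theorem IsAdjointPair.ker_aeval_eq_bot_of_isotropic (hB : B.SeparatingLeft)
    (hf : IsAdjointPair B B f f) {ι : Type*} [Fintype ι] {q : ι → R[X]}
    (hq : Pairwise (IsCoprime on q)) (h0 : aeval f (∏ i, q i) = 0) (i : ι)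
    (hiso : ∀ u ∈ ker (aeval f (q i)), ∀ v ∈ ker (aeval f (q i)), B u v = 0) :
    ker (aeval f (q i)) = ⊥ := by
  refine eq_bot_iff.2 fun w hw => (Submodule.mem_bot R).2 (hB w fun v => ?_)
  have hle : ⨆ j, ker (aeval f (q j)) ≤ ker (B w) := iSup_le fun j v hv => by
    by_cases hji : j = i
    · subst hji; exact hiso w hw v hv
    · exact hf.apply_eq_zero_of_isCoprime (hq (Ne.symm hji)) hw hv
  exact hle (iSup_ker_aeval_eq_top f hq h0 ▸ Submodule.mem_top)

end AdjointPair

section Field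

variable {K V : Type*} [Field K] [AddCommGroup V] [Module K V] [FiniteDimensional K V]
  (f : Module.End K V)

theorem charpoly_eq_pow_of_aeval_eq_zero {φ : K[X]} (hmon : φ.Monic) (hirr : Irreducible φ)
    (hφ : aeval f φ = 0) : ∃ s, f.charpoly = φ ^ s := by
  classical
  let b := Module.finBasis K V
  have hφM : aeval (toMatrix b b f) φ = 0 := by
    rw [show toMatrix b b f = toMatrixAlgEquiv b f from rfl, aeval_algHom_apply, hφ, map_zero]
  have hfac : ∀ π ∈ UniqueFactorizationMonoid.normalizedFactors f.charpoly, π = φ := by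
    intro π hπ
    obtain ⟨hπirr, hπmon, hπdvd⟩ :=
      (Polynomial.mem_normalizedFactors_iff f.charpoly_monic.ne_zero).1 hπ
    refine eq_of_monic_of_associated hπmon hmon (hπirr.associated_of_dvd hirr ?_)
    exact (toMatrix b b f).dvd_of_dvd_charpoly_of_aeval_eq_zero hπirr
      (by rwa [charpoly_toMatrix]) hφM
  refine ⟨(UniqueFactorizationMonoid.normalizedFactors f.charpoly).card, ?_⟩
  rw [← Multiset.prod_replicate, ← Multiset.eq_replicate_of_mem hfac,
    UniqueFactorizationMonoid.prod_normalizedFactors_eq f.charpoly_monic.ne_zero,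
    f.charpoly_monic.normalize_eq_self]

theorem charpoly_eq_mul_of_isCompl {p q : Submodule K V} (h : IsCompl p q)
    (hp : ∀ x ∈ p, f x ∈ p) (hq : ∀ x ∈ q, f x ∈ q) :
    f.charpoly = (f.restrict hp).charpoly * (f.restrict hq).charpoly := by
  rw [← charpoly_prodMap, ← LinearEquiv.charpoly_conj (Submodule.prodEquivOfIsCompl p q h)]
  congr 1
  ext v
  obtain ⟨w, rfl⟩ := (Submodule.prodEquivOfIsCompl p q h).surjective v
  simp [LinearEquiv.conj_apply_apply]

theorem finrank_ker_aeval_le_natDegree {φ ψ : K[X]} (hmon : φ.Monic) (hirr : Irreducible φ)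
    (hχ : f.charpoly = φ * ψ) (hcop : IsCoprime φ ψ) :
    finrank K (ker (aeval f φ)) ≤ φ.natDegree := by
  have hcompl : IsCompl (ker (aeval f φ)) (ker (aeval f ψ)) :=
    ⟨disjoint_ker_aeval_of_isCoprime f hcop, codisjoint_iff.2 <| by
      rw [sup_ker_aeval_eq_ker_aeval_mul_of_coprime f hcop, ← hχ, aeval_self_charpoly,
        ker_zero]⟩
  obtain ⟨s, hs⟩ := charpoly_eq_pow_of_aeval_eq_zero (f.restrict (apply_mem_ker_aeval f φ))
    hmon hirr (aeval_restrict_eq_zero_of_le_ker f _ le_rfl)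
  have hs1 : s ≤ 1 := by
    by_contra! h
    have hdvd : φ * φ ∣ φ * ψ := by
      rw [← pow_two, ← hχ, charpoly_eq_mul_of_isCompl f hcompl (apply_mem_ker_aeval f φ)
        (apply_mem_ker_aeval f ψ), hs]
      exact (pow_dvd_pow φ h).mul_right _
    exact hirr.not_isUnit (hcop.isUnit_of_dvd' dvd_rfl ((mul_dvd_mul_iff_left hirr.ne_zero).1 hdvd))
  calc finrank K (ker (aeval f φ)) = s * φ.natDegree := by
        rw [← charpoly_natDegree (f.restrict (apply_mem_ker_aeval f φ)), hs, natDegree_pow]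
    _ ≤ φ.natDegree := by simpa using Nat.mul_le_mul_right φ.natDegree hs1

theorem inf_ker_aeval_eq_bot_or_ker_aeval_le {φ : K[X]} (hmon : φ.Monic) (hirr : Irreducible φ)
    (hdim : finrank K (ker (aeval f φ)) ≤ φ.natDegree) {W : Submodule K V}
    (hW : ∀ x ∈ W, f x ∈ W) :
    W ⊓ ker (aeval f φ) = ⊥ ∨ ker (aeval f φ) ≤ W := by
  have hN : ∀ x ∈ W ⊓ ker (aeval f φ), f x ∈ W ⊓ ker (aeval f φ) :=
    fun x hx => ⟨hW x hx.1, apply_mem_ker_aeval f φ x hx.2⟩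
  obtain ⟨s, hs⟩ := charpoly_eq_pow_of_aeval_eq_zero (f.restrict hN) hmon hirr
    (aeval_restrict_eq_zero_of_le_ker f hN inf_le_right)
  have hfin : finrank K ↥(W ⊓ ker (aeval f φ)) = s * φ.natDegree := by
    rw [← charpoly_natDegree (f.restrict hN), hs, natDegree_pow]
  rcases Nat.eq_zero_or_pos s with rfl | hpos
  · exact Or.inl (Submodule.finrank_eq_zero.1 (by rw [hfin, zero_mul]))
  · refine Or.inr (inf_eq_right.1 (Submodule.eq_of_le_of_finrank_le inf_le_right (hdim.trans ?_)))
    exact hfin ▸ Nat.le_mul_of_pos_left _ hpos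

end Field

namespace IsAdjointPair

variable {K V : Type*} [Field K] [AddCommGroup V] [Module K V] [FiniteDimensional K V]
  {B : LinearMap.BilinForm K V} {f : Module.End K V} {ι : Type*} [Fintype ι] {φ : ι → K[X]}
  {r : ι → ℕ} {W : Submodule K V}

theorem inf_ker_aeval_eq_bot_of_isotropic (hB : B.SeparatingLeft) (hf : IsAdjointPair B B f f)
    (hmon : ∀ i, (φ i).Monic) (hirr : ∀ i, Irreducible (φ i)) (hinj : Injective φ)
    (hχ : f.charpoly = ∏ i, φ i ^ r i) (hW : ∀ x ∈ W, f x ∈ W)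
    (hWiso : ∀ u ∈ W, ∀ v ∈ W, B u v = 0) {i : ι} (hri : r i = 1) :
    W ⊓ ker (aeval f (φ i ^ r i)) = ⊥ := by
  classical
  have hcop := pairwise_isCoprime_pow hmon hirr hinj r
  have hdim : finrank K (ker (aeval f (φ i))) ≤ (φ i).natDegree := by
    refine finrank_ker_aeval_le_natDegree f (hmon i) (hirr i)
      (ψ := ∏ j ∈ Finset.univ.erase i, φ j ^ r j) ?_ (IsCoprime.prod_right fun j hj => ?_)
    · rw [hχ, ← Finset.mul_prod_erase _ _ (Finset.mem_univ i), hri, pow_one]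
    · simpa [hri, onFun] using hcop (Finset.ne_of_mem_erase hj).symm
  rw [hri, pow_one]
  rcases inf_ker_aeval_eq_bot_or_ker_aeval_le f (hmon i) (hirr i) hdim hW with h | hle
  · exact h
  have hbot := hf.ker_aeval_eq_bot_of_isotropic hB hcop (hχ ▸ aeval_self_charpoly f) i
    (by simpa [hri] using fun u hu v hv => hWiso u (hle hu) v (hle hv))
  rw [hri, pow_one] at hbot
  rw [hbot, inf_bot_eq]

theorem eq_iSup_inf_ker_aeval_of_isotropic (hB : B.SeparatingLeft) (hf : IsAdjointPair B B f f)
    (hmon : ∀ i, (φ i).Monic) (hirr : ∀ i, Irreducible (φ i)) (hinj : Injective φ)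
    (hr : ∀ i, 1 ≤ r i) (hχ : f.charpoly = ∏ i, φ i ^ r i) (hW : ∀ x ∈ W, f x ∈ W)
    (hWiso : ∀ u ∈ W, ∀ v ∈ W, B u v = 0) :
    W = ⨆ (i) (_ : 2 ≤ r i), W ⊓ ker (aeval f (φ i ^ r i)) := by
  conv_lhs => rw [← iSup_inf_ker_aeval_eq f (pairwise_isCoprime_pow hmon hirr hinj r)
    (hχ ▸ aeval_self_charpoly f) hW]
  refine iSup_congr fun i => ?_
  by_cases h : 2 ≤ r i
  · rw [iSup_pos h]
  · rw [iSup_neg h, hf.inf_ker_aeval_eq_bot_of_isotropic hB hmon hirr hinj hχ hW hWiso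
      (by have := hr i; omega)]

end IsAdjointPair

end LinearMap

theorem Matrix.toLin'_aeval_s9 {R n : Type*} [CommRing R] [Fintype n] [DecidableEq n]
    (A : Matrix n n R) (q : R[X]) : toLin' (aeval A q) = aeval (toLin' A) q :=
  (aeval_algHom_apply toLinAlgEquiv' A q).symm

theorem Matrix.isAdjointPair_toLin' {R n : Type*} [CommRing R] [Fintype n] [DecidableEq n]
    {A : Matrix n n R} (hA : Aᵀ = A) :
    LinearMap.IsAdjointPair (dotProductBilin R R) (dotProductBilin R R) (toLin' A) (toLin' A) :=
  fun x y => by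
    simp only [dotProductBilin_apply_apply, toLin'_apply, dotProduct_mulVec, ← mulVec_transpose,
      hA]

/-- **Lemma.** Primary decomposition setting: p prime, A an n×n symmetric matrix over F_p with
χ(A;x) = φ_1^{r_1} ⋯ φ_k^{r_k} (distinct monic irreducibles φ_i, r_i ≥ 1),
V_i = ker φ_i^{r_i}(A).  If U is a totally isotropic A-invariant subspace, then
U = ⊕_{i : r_i ≥ 2} (U ∩ V_i) (an internal direct sum). -/
theorem totally_isotropic_eq_direct_sum {p n k : ℕ} (hp : p.Prime)
    (A : Matrix (Fin n) (Fin n) (ZMod p)) (hA : Aᵀ = A)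
    (φ : Fin k → Polynomial (ZMod p)) (r : Fin k → ℕ)
    (hmon : ∀ i, (φ i).Monic) (hirr : ∀ i, Irreducible (φ i))
    (hinj : Function.Injective φ) (hr : ∀ i, 1 ≤ r i)
    (hchar : A.charpoly = ∏ i, φ i ^ r i)
    (U : Submodule (ZMod p) (Fin n → ZMod p))
    (hUiso : ∀ u ∈ U, ∀ v ∈ U, u ⬝ᵥ v = 0)
    (hUinv : ∀ x ∈ U, A *ᵥ x ∈ U) :
    U = (⨆ (i : Fin k) (_ : 2 ≤ r i),
          U ⊓ LinearMap.ker (Matrix.toLin' (Polynomial.aeval A (φ i ^ r i)))) ∧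
    iSupIndep (fun i : {i : Fin k // 2 ≤ r i} =>
      U ⊓ LinearMap.ker (Matrix.toLin' (Polynomial.aeval A (φ i.1 ^ r i.1)))) := by
  have := Fact.mk hp
  simp only [toLin'_aeval_s9]
  refine ⟨(isAdjointPair_toLin' hA).eq_iSup_inf_ker_aeval_of_isotropic
    (fun x hx => dotProduct_eq_zero x hx) hmon hirr hinj hr (by rw [charpoly_toLin', hchar])
    hUinv hUiso, ?_⟩
  exact ((LinearMap.iSupIndep_ker_aeval _ (pairwise_isCoprime_pow hmon hirr hinj r)).comp
    Subtype.val_injective).mono fun i => inf_le_right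
end

section
/- Let A be an n×n integral matrix, p a prime, and φ(x) a monic irreducible factor over F_p of the mod-p reduction of the characteristic polynomial of A. Then ord_p(det φ(A)) ≥ deg φ(x), where φ(A) is the integer matrix formed from the lift of φ to ℤ[x] with coefficients in {0,1,…,p−1}. -/
open Polynomial Matrix BigOperators

/-- The lift of a polynomial over F_p to ℤ[x], with all coefficients in {0, 1, …, p-1}. -/
noncomputable def liftZ (p : ℕ) (f : Polynomial (ZMod p)) : Polynomial ℤ :=
  ∑ i ∈ Finset.range (f.natDegree + 1), Polynomial.C ((f.coeff i).val : ℤ) * Polynomial.X ^ i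

/-- ord_p(m) = max{k : p^k ∣ m} for m ≠ 0, and ord_p(0) = ∞. -/
noncomputable def ordP (p : ℕ) (m : ℤ) : ℕ∞ :=
  if m = 0 then ⊤ else (padicValInt p m : ℕ∞)

/-!
Modulo `p`, `φ(A)` reduces to `φ(Ā)`. A root `β` of `φ` in an algebraic closure is an eigenvalue
of `Ā`, so `0 = φ(β)` lies in the spectrum of `φ(Ā)`: this matrix is singular. If `v ≠ 0` is in
its kernel, then `v, Āv, …, Āᵈ⁻¹v` (`d = deg φ`) are independent, because a nonzero polynomial of
degree `< d` killing `v` would be coprime to the irreducible `φ`. So `ker φ(Ā)` has dimension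
`k ≥ d`. Finally, for an integer matrix `M` whose reduction has a `k`-dimensional kernel, pick
an integer matrix `B`, invertible mod `p`, with `k` columns reducing into that kernel: those `k`
columns of `M * B` are divisible by `p`, hence `p ^ k ∣ det M * det B` while `p ∤ det B`.
-/

open Module LinearMap Finset

theorem map_liftZ (p : ℕ) [NeZero p] (φ : (ZMod p)[X]) :
    (liftZ p φ).map (Int.castRingHom (ZMod p)) = φ := by
  conv_rhs => rw [φ.as_sum_range_C_mul_X_pow]
  simp only [liftZ, Polynomial.map_sum, Polynomial.map_mul, Polynomial.map_pow, Polynomial.map_X,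
    Polynomial.map_C, Int.coe_castRingHom, ZMod.natCast_val, ZMod.intCast_zmod_cast]

theorem map_aeval_liftZ {ι : Type*} [Fintype ι] [DecidableEq ι] (p : ℕ) [NeZero p]
    (A : Matrix ι ι ℤ) (φ : (ZMod p)[X]) :
    (aeval A (liftZ p φ)).map (Int.cast : ℤ → ZMod p) =
      aeval (A.map (Int.cast : ℤ → ZMod p)) φ := by
  have h := aeval_algHom_apply (Int.castRingHom (ZMod p)).toIntAlgHom.mapMatrix A (liftZ p φ)
  rw [← aeval_map_algebraMap (ZMod p), algebraMap_int_eq, map_liftZ] at h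
  exact h.symm

theorem le_ordP_of_pow_dvd {p : ℕ} (hp : p.Prime) {k : ℕ} {m : ℤ} (h : (p : ℤ) ^ k ∣ m) :
    (k : ℕ∞) ≤ ordP p m := by
  have := Fact.mk hp
  unfold ordP
  split_ifs with hm
  · exact le_top
  · exact_mod_cast ((padicValInt_dvd_iff k m).mp h).resolve_left hm

theorem Matrix.not_isUnit_aeval_of_dvd_charpoly {K ι : Type*} [Field K] [Fintype ι] [DecidableEq ι]
    (M : Matrix ι ι K) {φ : K[X]} (hφ : Irreducible φ) (hdvd : φ ∣ M.charpoly) :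
    ¬IsUnit (aeval M φ) := by
  let L := AlgebraicClosure K
  obtain ⟨β, hβ⟩ := IsAlgClosed.exists_aeval_eq_zero L φ (degree_pos_of_irreducible hφ).ne'
  have hspec : β ∈ spectrum L (M.map (algebraMap K L)) := by
    rw [mem_spectrum_iff_isRoot_charpoly, charpoly_map, IsRoot, eval_map_algebraMap]
    exact aeval_eq_zero_of_dvd_aeval_eq_zero hdvd hβ
  have h0 : eval β (φ.map (algebraMap K L)) ∈
      spectrum L (aeval (M.map (algebraMap K L)) (φ.map (algebraMap K L))) :=
    spectrum.subset_polynomial_aeval _ _ ⟨β, hspec, rfl⟩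
  rw [eval_map_algebraMap, hβ, spectrum.zero_mem_iff, aeval_map_algebraMap,
    show M.map (algebraMap K L) = (Algebra.ofId K L).mapMatrix M from rfl,
    aeval_algHom_apply] at h0
  exact fun hu => h0 (hu.map _)

theorem linearIndependent_pow_apply_of_aeval_apply_eq_zero {K V : Type*} [Field K]
    [AddCommGroup V] [Module K V] (f : Module.End K V) {φ : K[X]} (hφ : Irreducible φ) {v : V}
    (hv : v ≠ 0) (hφv : aeval f φ v = 0) :
    LinearIndependent K fun i : Fin φ.natDegree => (f ^ (i : ℕ)) v := by
  refine Fintype.linearIndependent_iff.2 fun g hg i => ?_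
  set q : K[X] := ∑ j : Fin φ.natDegree, C (g j) * X ^ (j : ℕ)
  have hqv : aeval f q v = 0 := by
    simpa [q, map_sum, LinearMap.sum_apply, Algebra.smul_def] using hg
  have hq : q = 0 := by
    by_contra hq
    have hndvd : ¬φ ∣ q := fun h => hq (eq_zero_of_dvd_of_degree_lt h
      ((degree_sum_fin_lt g).trans_eq (degree_eq_natDegree hφ.ne_zero).symm))
    exact hv (Submodule.disjoint_def.1
      (disjoint_ker_aeval_of_isCoprime f ((hφ.coprime_iff_not_dvd).2 hndvd)) v hφv hqv)
  simpa [q, finsetSum_coeff, coeff_C_mul_X_pow, Fin.val_eq_val] using congrArg (coeff · i) hq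

theorem natDegree_le_finrank_ker_aeval {K V : Type*} [Field K] [AddCommGroup V] [Module K V]
    [FiniteDimensional K V] (f : Module.End K V) {φ : K[X]} (hφ : Irreducible φ)
    (hf : ¬IsUnit (aeval f φ)) : φ.natDegree ≤ finrank K (ker (aeval f φ)) := by
  rw [isUnit_iff_ker_eq_bot] at hf
  obtain ⟨v, hv, hv0⟩ := Submodule.exists_mem_ne_zero_of_ne_bot hf
  have hmem (i : ℕ) : (f ^ i) v ∈ ker (aeval f φ) := by
    have hcomm : aeval f φ * f ^ i = f ^ i * aeval f φ := by
      simpa using ((Commute.all φ (X ^ i)).map (aeval f)).eq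
    rw [mem_ker, ← Module.End.mul_apply, hcomm, Module.End.mul_apply, mem_ker.1 hv, map_zero]
  let w (i : Fin φ.natDegree) : ker (aeval f φ) := ⟨(f ^ (i : ℕ)) v, hmem i⟩
  have hw : LinearIndependent K w :=
    .of_comp (ker (aeval f φ)).subtype
      (linearIndependent_pow_apply_of_aeval_apply_eq_zero f hφ hv0 hv)
  simpa using hw.fintype_card_le_finrank

theorem Matrix.pow_card_dvd_det_of_dvd_cols {R ι : Type*} [CommRing R] [Fintype ι]
    [DecidableEq ι] (N : Matrix ι ι R) (a : R) (S : Finset ι) (h : ∀ i, ∀ j ∈ S, a ∣ N i j) :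
    a ^ #S ∣ N.det := by
  choose c hc using h
  let N' : Matrix ι ι R := of fun i j => if hj : j ∈ S then c i j hj else N i j
  have hN : N = N' * diagonal fun j => if j ∈ S then a else 1 := by
    ext i j
    by_cases hj : j ∈ S
    · simp [N', hj, hc i j hj, mul_comm]
    · simp [N', hj]
  rw [hN, det_mul, det_diagonal, Fintype.prod_ite_mem, prod_const]
  exact dvd_mul_left _ _

theorem Module.Basis.exists_basis_finrank_mem {K V ι : Type*} [Field K] [AddCommGroup V]
    [Module K V] [FiniteDimensional K V] (b₀ : Basis ι K V) (W : Submodule K V) :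
    ∃ (b : Basis ι K V) (S : Finset ι), #S = finrank K W ∧ ∀ j ∈ S, b j ∈ W := by
  let w (i : Fin (finrank K W)) : V := finBasis K W i
  have hw : LinearIndependent K w := (finBasis K W).linearIndependent.map' W.subtype W.ker_subtype
  let b₁ := Basis.sumExtend hw
  let e := b₁.indexEquiv b₀
  refine ⟨b₁.reindex e, univ.map (Function.Embedding.inl.trans e.toEmbedding), by simp, ?_⟩
  simp only [mem_map, mem_univ, true_and, forall_exists_index]
  rintro _ i rfl
  have : b₁ (Sum.inl i) = w i := by simp [b₁, Basis.sumExtend]; rfl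
  simp [this, w]

theorem pow_finrank_ker_dvd_det {ι : Type*} [Fintype ι] [DecidableEq ι] {p : ℕ} (hp : p.Prime)
    (M : Matrix ι ι ℤ) :
    (p : ℤ) ^ finrank (ZMod p) (ker (toLin' (M.map (Int.cast : ℤ → ZMod p)))) ∣ M.det := by
  have := Fact.mk hp
  obtain ⟨b, S, hS, hbS⟩ := (Pi.basisFun (ZMod p) ι).exists_basis_finrank_mem
    (ker (toLin' (M.map (Int.cast : ℤ → ZMod p))))
  let B : Matrix ι ι ℤ := of fun i j => Function.surjInv ZMod.intCast_surjective (b j i)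
  have hB : B.map (Int.cast : ℤ → ZMod p) = of fun i j => b j i := by
    ext i j; simp [B, Function.surjInv_eq]
  have hBdet : ¬(p : ℤ) ∣ B.det := by
    rw [← ZMod.intCast_zmod_eq_zero_iff_dvd, Int.cast_det, hB, ← Ne, ← isUnit_iff_ne_zero,
      ← Matrix.isUnit_iff_isUnit_det, ← linearIndependent_cols_iff_isUnit]
    exact b.linearIndependent
  have hcols : ∀ i, ∀ j ∈ S, (p : ℤ) ∣ (M * B) i j := by
    intro i j hj
    have := congrFun (mem_ker.1 (hbS j hj)) i
    rw [← ZMod.intCast_zmod_eq_zero_iff_dvd]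
    simpa [B, mul_apply, mulVec, dotProduct, Function.surjInv_eq] using this
  rw [← hS]
  exact (Nat.prime_iff_prime_int.1 hp).pow_dvd_of_dvd_mul_right _ hBdet
    (det_mul M B ▸ (M * B).pow_card_dvd_det_of_dvd_cols _ S hcols)

theorem ordP_det_ge_deg_general {n : ℕ} (p : ℕ) (hp : p.Prime) (A : Matrix (Fin n) (Fin n) ℤ)
    (φ : Polynomial (ZMod p)) (hirr : Irreducible φ)
    (hdvd : φ ∣ (A.map (Int.cast : ℤ → ZMod p)).charpoly) :
    (φ.natDegree : ℕ∞) ≤ ordP p (Polynomial.aeval A (liftZ p φ)).det := by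
  have := Fact.mk hp
  set Ā := A.map (Int.cast : ℤ → ZMod p)
  have htoLin : aeval (toLin' Ā) φ = toLin' (aeval Ā φ) := aeval_algHom_apply toLinAlgEquiv' Ā φ
  have hsingular : ¬IsUnit (aeval (toLin' Ā) φ) := by
    rw [htoLin]
    exact (isUnit_map_iff toLinAlgEquiv' _).not.2 (Ā.not_isUnit_aeval_of_dvd_charpoly hirr hdvd)
  have hdeg := natDegree_le_finrank_ker_aeval _ hirr hsingular
  rw [htoLin, ← map_aeval_liftZ] at hdeg
  exact le_ordP_of_pow_dvd hp ((pow_dvd_pow _ hdeg).trans (pow_finrank_ker_dvd_det hp _))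

/-- **Lemma.** If φ is a monic irreducible factor over F_p of the mod-p reduction of the
characteristic polynomial of the integral matrix A, then ord_p(det φ(A)) ≥ deg φ,
where φ(A) is formed from the lift of φ to ℤ[x] with coefficients in {0,…,p-1}. -/
theorem ordP_det_ge_deg {n : ℕ} (p : ℕ) (hp : p.Prime) (A : Matrix (Fin n) (Fin n) ℤ)
    (φ : Polynomial (ZMod p)) (hmon : φ.Monic) (hirr : Irreducible φ)
    (hdvd : φ ∣ (A.map (Int.cast : ℤ → ZMod p)).charpoly) :
    (φ.natDegree : ℕ∞) ≤ ordP p (Polynomial.aeval A (liftZ p φ)).det :=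
  ordP_det_ge_deg_general p hp A φ hirr hdvd
end

section
/- Let G be a controllable graph on n vertices. An n-vertex graph H is generalized cospectral with G if and only if there exists a regular rational orthogonal matrix Q with Q^T A(G) Q = A(H); moreover, such a Q is unique and satisfies Q^T = W(H)·W(G)^{-1}. -/
open Polynomial Matrix BigOperators

/-!
Write `e` for the all-ones vector, `J = e eᵀ`, and `w_k(A) = eᵀ Aᵏ e` for the walk counts. Over
`R⟦t⟧` the matrix `I - tA` has inverse `∑ Aᵏ tᵏ`, so the matrix determinant lemma gives
`det (I - t(A + J)) = det (I - tA) · (1 - t ∑ w_k(A) tᵏ)`; since `det (I - tA)` is the reversed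
characteristic polynomial and a unit, generalized cospectral matrices have the same walk counts.
For symmetric `A` the matrices `W(A)ᵀ Aᵏ W(A)` are Hankel matrices of walk counts, so `W = W(A)`
and `V = W(B)` satisfy `WᵀW = VᵀV` and `WᵀAW = VᵀBV`; when `W` is invertible this makes
`Q = (V W⁻¹)ᵀ` a regular orthogonal matrix with `QᵀAQ = B`. Conversely, any such `Q` fixes `J`
and maps `Aᵏ e` to `Bᵏ e`, so `Qᵀ W(A) = W(B)`, which determines `Q`.
-/

namespace Matrix

section

variable {n R : Type*} [Fintype n] [CommRing R]

lemma transpose_mul_allOnes_mul {Q : Matrix n n R} (hQ : Qᵀ *ᵥ 1 = 1) :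
    Qᵀ * (of fun _ _ => 1 : Matrix n n R) * Q = of fun _ _ => 1 := by
  have hcol : ∀ j, ∑ i, Q i j = 1 := fun j => by simpa [mulVec, dotProduct] using congrFun hQ j
  ext i j
  simp [mul_apply, hcol]

variable [DecidableEq n]

def walkCount (A : Matrix n n R) (k : ℕ) : R := 1 ⬝ᵥ (A ^ k *ᵥ 1)

def resolventSeries (A : Matrix n n R) : Matrix n n (PowerSeries R) :=
  of fun i j => PowerSeries.mk fun k => (A ^ k) i j

lemma map_C_mul_resolventSeries (A : Matrix n n R) :
    A.map PowerSeries.C * A.resolventSeries =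
      of fun i j => PowerSeries.mk fun k => (A ^ (k + 1)) i j := by
  ext i j k
  simp [resolventSeries, mul_apply, PowerSeries.coeff_C_mul, pow_succ', map_sum]

lemma one_sub_X_smul_mul_resolventSeries (A : Matrix n n R) :
    (1 - (PowerSeries.X : PowerSeries R) • A.map PowerSeries.C) * A.resolventSeries = 1 := by
  rw [sub_mul, one_mul, smul_mul_assoc, map_C_mul_resolventSeries]
  ext i j (_ | k)
  · simp [resolventSeries, one_apply]
  · rw [one_apply]
    split_ifs <;> simp [resolventSeries, PowerSeries.coeff_succ_X_mul]

lemma coe_charpolyRev (A : Matrix n n R) :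
    (A.charpolyRev : PowerSeries R) =
      (1 - (PowerSeries.X : PowerSeries R) • A.map PowerSeries.C).det := by
  rw [charpolyRev, ← Polynomial.coeToPowerSeries.ringHom_apply, RingHom.map_det]
  congr 1
  ext i j : 1
  simp [one_apply, apply_ite, (PowerSeries.commute_X _).eq]

lemma one_dotProduct_resolventSeries_mulVec_one (A : Matrix n n R) :
    1 ⬝ᵥ (A.resolventSeries *ᵥ 1) = PowerSeries.mk A.walkCount := by
  ext k
  simp [resolventSeries, walkCount, dotProduct, mulVec, map_sum]

lemma coe_charpolyRev_add_allOnes (A : Matrix n n R) :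
    ((A + of fun _ _ => 1).charpolyRev : PowerSeries R) =
      (A.charpolyRev : PowerSeries R) * (1 - PowerSeries.X * PowerSeries.mk A.walkCount) := by
  have hsplit : 1 - (PowerSeries.X : PowerSeries R) • (A + of fun _ _ => 1).map PowerSeries.C =
      (1 - (PowerSeries.X : PowerSeries R) • A.map PowerSeries.C) *
        (1 - vecMulVec ((PowerSeries.X : PowerSeries R) • (A.resolventSeries *ᵥ 1)) 1) := by
    rw [mul_sub, mul_one, mul_vecMulVec, mulVec_smul, mulVec_mulVec,
      one_sub_X_smul_mul_resolventSeries, one_mulVec]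
    ext i j : 1
    simp [mul_add, sub_sub]
  rw [coe_charpolyRev, coe_charpolyRev, hsplit, det_mul, vecMulVec_eq (ι := Unit),
    det_one_sub_mul_comm]
  simp [one_dotProduct_resolventSeries_mulVec_one]

lemma charpolyRev_eq_of_charpoly_eq {A B : Matrix n n R} (h : A.charpoly = B.charpoly) :
    A.charpolyRev = B.charpolyRev := by
  rw [← reverse_charpoly, h, reverse_charpoly]

theorem walkCount_eq_of_charpoly_eq {A B : Matrix n n R} (h : A.charpoly = B.charpoly)
    (hJ : (A + of fun _ _ => 1).charpoly = (B + of fun _ _ => 1).charpoly) :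
    A.walkCount = B.walkCount := by
  have hunit : IsUnit (A.charpolyRev : PowerSeries R) := by
    rw [coe_charpolyRev]
    exact isUnit_det_of_right_inverse (one_sub_X_smul_mul_resolventSeries A)
  have hprod :
      (A.charpolyRev : PowerSeries R) * (1 - PowerSeries.X * PowerSeries.mk A.walkCount) =
        (A.charpolyRev : PowerSeries R) * (1 - PowerSeries.X * PowerSeries.mk B.walkCount) := by
    rw [← coe_charpolyRev_add_allOnes, charpolyRev_eq_of_charpoly_eq hJ,
      coe_charpolyRev_add_allOnes, charpolyRev_eq_of_charpoly_eq h]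
  have hseries := PowerSeries.X_mul_cancel (sub_right_injective (hunit.mul_left_cancel hprod))
  funext k
  simpa using congrArg (PowerSeries.coeff k) hseries

lemma transpose_mulVec_eq_of_mulVec_eq {Q : Matrix n n R} (hQ : Qᵀ * Q = 1) {v : n → R}
    (hv : Q *ᵥ v = v) : Qᵀ *ᵥ v = v := by
  conv_lhs => rw [← hv]
  rw [mulVec_mulVec, hQ, one_mulVec]

lemma charpoly_transpose_mul_mul {Q : Matrix n n R} (hQ : Qᵀ * Q = 1) (M : Matrix n n R) :
    (Qᵀ * M * Q).charpoly = M.charpoly := by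
  rw [charpoly_mul_comm, ← Matrix.mul_assoc, mul_eq_one_comm.mp hQ, Matrix.one_mul]

theorem charpoly_eq_of_regular_orthogonal {Q A B : Matrix n n R} (hQ : Qᵀ * Q = 1)
    (he : Q *ᵥ 1 = 1) (hAB : Qᵀ * A * Q = B) :
    A.charpoly = B.charpoly ∧
      (A + of fun _ _ => 1).charpoly = (B + of fun _ _ => 1).charpoly := by
  have hJ := transpose_mul_allOnes_mul (transpose_mulVec_eq_of_mulVec_eq hQ he)
  have hAJ : Qᵀ * (A + of fun _ _ => 1) * Q = B + of fun _ _ => 1 := by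
    rw [Matrix.mul_add, Matrix.add_mul, hAB, hJ]
  exact ⟨by rw [← hAB, charpoly_transpose_mul_mul hQ],
    by rw [← hAJ, charpoly_transpose_mul_mul hQ]⟩

theorem exists_regular_orthogonal_of_gram_eq {W V A B : Matrix n n R} (hW : IsUnit W.det)
    (h₀ : Wᵀ * W = Vᵀ * V) (h₁ : Wᵀ * A * W = Vᵀ * B * V) (he : Wᵀ *ᵥ 1 = Vᵀ *ᵥ 1) :
    ∃ Q : Matrix n n R, Qᵀ * Q = 1 ∧ Q *ᵥ 1 = 1 ∧ Qᵀ * A * Q = B := by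
  have hWinv : W⁻¹ᵀ * Wᵀ = 1 := by rw [← transpose_mul, mul_nonsing_inv _ hW, transpose_one]
  have hconj : ∀ M M', Wᵀ * M * W = Vᵀ * M' * V → (V * W⁻¹)ᵀ * M' * (V * W⁻¹) = M := by
    intro M M' h
    calc (V * W⁻¹)ᵀ * M' * (V * W⁻¹) = W⁻¹ᵀ * (Vᵀ * M' * V) * W⁻¹ := by
          simp only [transpose_mul, Matrix.mul_assoc]
      _ = (W⁻¹ᵀ * Wᵀ) * M * (W * W⁻¹) := by rw [← h]; simp only [Matrix.mul_assoc]
      _ = M := by rw [hWinv, mul_nonsing_inv _ hW, Matrix.one_mul, Matrix.mul_one]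
  have horth : (V * W⁻¹) * (V * W⁻¹)ᵀ = 1 := mul_eq_one_comm.mp <| by
    simpa only [Matrix.mul_one] using hconj 1 1 (by simpa only [Matrix.mul_one] using h₀)
  refine ⟨(V * W⁻¹)ᵀ, by rwa [transpose_transpose], ?_, ?_⟩
  · rw [transpose_mul, ← mulVec_mulVec, ← he, mulVec_mulVec, hWinv, one_mulVec]
  · calc (V * W⁻¹)ᵀᵀ * A * (V * W⁻¹)ᵀ
          = (V * W⁻¹) * ((V * W⁻¹)ᵀ * B * (V * W⁻¹)) * (V * W⁻¹)ᵀ := by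
            rw [transpose_transpose, hconj A B h₁]
      _ = ((V * W⁻¹) * (V * W⁻¹)ᵀ) * B * ((V * W⁻¹) * (V * W⁻¹)ᵀ) := by
            simp only [Matrix.mul_assoc]
      _ = B := by rw [horth, Matrix.one_mul, Matrix.mul_one]

section walkMatrix

variable {m : ℕ}

def walkMatrix (A : Matrix (Fin m) (Fin m) R) : Matrix (Fin m) (Fin m) R :=
  of fun i j => (A ^ (j : ℕ) *ᵥ 1) i

lemma walkMatrix_map {S : Type*} [CommRing S] (f : R →+* S) (A : Matrix (Fin m) (Fin m) R) :
    (walkMatrix A).map f = walkMatrix (A.map f) := by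
  ext i j
  simp [walkMatrix, RingHom.map_mulVec, Matrix.map_pow]

lemma mul_walkMatrix_apply (M A : Matrix (Fin m) (Fin m) R) (i j : Fin m) :
    (M * walkMatrix A) i j = (M *ᵥ (A ^ (j : ℕ) *ᵥ 1)) i :=
  rfl

lemma transpose_walkMatrix_mulVec_apply (A : Matrix (Fin m) (Fin m) R) (v : Fin m → R)
    (i : Fin m) : ((walkMatrix A)ᵀ *ᵥ v) i = (A ^ (i : ℕ) *ᵥ 1) ⬝ᵥ v :=
  rfl

lemma transpose_walkMatrix_mulVec_one (A : Matrix (Fin m) (Fin m) R) :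
    (walkMatrix A)ᵀ *ᵥ 1 = fun j : Fin m => A.walkCount j := by
  ext j
  rw [transpose_walkMatrix_mulVec_apply, dotProduct_comm, walkCount]

lemma transpose_walkMatrix_mul_pow_mul_walkMatrix {A : Matrix (Fin m) (Fin m) R} (hA : Aᵀ = A)
    (k : ℕ) :
    (walkMatrix A)ᵀ * A ^ k * walkMatrix A = of fun i j : Fin m => A.walkCount (i + k + j) := by
  have hrow : ∀ l : ℕ, A ^ l *ᵥ 1 = 1 ᵥ* A ^ l := fun l => by
    rw [← vecMul_transpose, transpose_pow, hA]
  ext i j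
  rw [mul_walkMatrix_apply, ← mulVec_mulVec, mulVec_mulVec _ (A ^ k), ← pow_add,
    transpose_walkMatrix_mulVec_apply, hrow, ← dotProduct_mulVec, mulVec_mulVec, ← pow_add,
    ← add_assoc, of_apply, walkCount]

lemma mul_walkMatrix_of_semiconjBy {P A B : Matrix (Fin m) (Fin m) R} (h : SemiconjBy P A B)
    (hP : P *ᵥ 1 = 1) : P * walkMatrix A = walkMatrix B := by
  ext i j
  rw [mul_walkMatrix_apply, mulVec_mulVec, (h.pow_right j).eq, ← mulVec_mulVec, hP]
  rfl

theorem exists_regular_orthogonal_of_charpoly_eq {A B : Matrix (Fin m) (Fin m) R} (hA : Aᵀ = A)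
    (hB : Bᵀ = B) (hW : IsUnit (walkMatrix A).det) (h : A.charpoly = B.charpoly)
    (hJ : (A + of fun _ _ => 1).charpoly = (B + of fun _ _ => 1).charpoly) :
    ∃ Q : Matrix (Fin m) (Fin m) R, Qᵀ * Q = 1 ∧ Q *ᵥ 1 = 1 ∧ Qᵀ * A * Q = B := by
  have hw := walkCount_eq_of_charpoly_eq h hJ
  have hgram : ∀ k,
      (walkMatrix A)ᵀ * A ^ k * walkMatrix A = (walkMatrix B)ᵀ * B ^ k * walkMatrix B := by
    intro k
    rw [transpose_walkMatrix_mul_pow_mul_walkMatrix hA,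
      transpose_walkMatrix_mul_pow_mul_walkMatrix hB, hw]
  exact exists_regular_orthogonal_of_gram_eq hW (by simpa using hgram 0) (by simpa using hgram 1)
    (by rw [transpose_walkMatrix_mulVec_one, transpose_walkMatrix_mulVec_one, hw])

theorem transpose_eq_walkMatrix_mul_inv {Q A B : Matrix (Fin m) (Fin m) R}
    (hW : IsUnit (walkMatrix A).det) (hQ : Qᵀ * Q = 1) (he : Q *ᵥ 1 = 1)
    (hAB : Qᵀ * A * Q = B) : Qᵀ = walkMatrix B * (walkMatrix A)⁻¹ := by
  have hsemiconj : SemiconjBy Qᵀ A B := by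
    rw [SemiconjBy, ← hAB, Matrix.mul_assoc _ Q, mul_eq_one_comm.mp hQ, Matrix.mul_one]
  rw [← mul_walkMatrix_of_semiconjBy hsemiconj (transpose_mulVec_eq_of_mulVec_eq hQ he),
    mul_nonsing_inv_cancel_right _ _ hW]

end walkMatrix

end

lemma charpoly_map_eq_charpoly_map_iff {n R S : Type*} [Fintype n] [DecidableEq n] [CommRing R]
    [CommRing S] {f : R →+* S} (hf : Function.Injective f) {M N : Matrix n n R} :
    (M.map f).charpoly = (N.map f).charpoly ↔ M.charpoly = N.charpoly := by
  rw [charpoly_map, charpoly_map, (Polynomial.map_injective f hf).eq_iff]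

end Matrix

section Graphs

variable {n : ℕ} (G H : SimpleGraph (Fin n)) [DecidableRel G.Adj] [DecidableRel H.Adj]

lemma transpose_adjMat_map_intCast :
    ((adjMat G).map (Int.cast : ℤ → ℚ))ᵀ = (adjMat G).map (Int.cast : ℤ → ℚ) := by
  rw [← transpose_map, adjMat, SimpleGraph.transpose_adjMatrix]

lemma walkMat_map_intCast :
    (walkMat G).map (Int.cast : ℤ → ℚ) = walkMatrix ((adjMat G).map (Int.cast : ℤ → ℚ)) :=
  walkMatrix_map (Int.castRingHom ℚ) (adjMat G)

lemma genCospectral_iff_charpoly_map_intCast :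
    genCospectral G H ↔
      ((adjMat G).map (Int.cast : ℤ → ℚ)).charpoly =
          ((adjMat H).map (Int.cast : ℤ → ℚ)).charpoly ∧
        ((adjMat G).map (Int.cast : ℤ → ℚ) + of fun _ _ => 1).charpoly =
          ((adjMat H).map (Int.cast : ℤ → ℚ) + of fun _ _ => 1).charpoly := by
  have hJ : ∀ M : Matrix (Fin n) (Fin n) ℤ,
      (M + Jmat n).map (Int.cast : ℤ → ℚ) = M.map Int.cast + of fun _ _ => 1 := fun M => by
    ext i j
    simp [Jmat]
  have hcast : ∀ M N : Matrix (Fin n) (Fin n) ℤ,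
      M.charpoly = N.charpoly ↔ (M.map (Int.cast : ℤ → ℚ)).charpoly = (N.map Int.cast).charpoly :=
    fun _ _ => (charpoly_map_eq_charpoly_map_iff (f := Int.castRingHom ℚ) Int.cast_injective).symm
  rw [genCospectral, ← hJ, ← hJ]
  exact and_congr (hcast _ _) (hcast _ _)

end Graphs

/-- **Lemma.** Let G be controllable.  H is generalized cospectral with G iff there is a
regular rational orthogonal matrix Q with QᵀA(G)Q = A(H); moreover such Q is unique and
satisfies Qᵀ = W(H)·W(G)⁻¹. -/
theorem genCospectral_iff_exists_regular_orthogonal {n : ℕ} (G H : SimpleGraph (Fin n))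
    [DecidableRel G.Adj] [DecidableRel H.Adj] (hcon : (walkMat G).det ≠ 0) :
    (genCospectral G H ↔ ∃ Q : Matrix (Fin n) (Fin n) ℚ,
        Qᵀ * Q = 1 ∧ (Q *ᵥ fun _ => (1 : ℚ)) = (fun _ => 1) ∧
        Qᵀ * (adjMat G).map (Int.cast : ℤ → ℚ) * Q = (adjMat H).map (Int.cast : ℤ → ℚ)) ∧
    ∀ Q : Matrix (Fin n) (Fin n) ℚ,
      (Qᵀ * Q = 1 ∧ (Q *ᵥ fun _ => (1 : ℚ)) = (fun _ => 1) ∧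
        Qᵀ * (adjMat G).map (Int.cast : ℤ → ℚ) * Q = (adjMat H).map (Int.cast : ℤ → ℚ)) →
      (Qᵀ = (walkMat H).map (Int.cast : ℤ → ℚ) * ((walkMat G).map (Int.cast : ℤ → ℚ))⁻¹ ∧
       ∀ Q' : Matrix (Fin n) (Fin n) ℚ,
         (Q'ᵀ * Q' = 1 ∧ (Q' *ᵥ fun _ => (1 : ℚ)) = (fun _ => 1) ∧
           Q'ᵀ * (adjMat G).map (Int.cast : ℤ → ℚ) * Q' =
             (adjMat H).map (Int.cast : ℤ → ℚ)) →
         Q' = Q) := by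
  have hW : IsUnit (walkMatrix ((adjMat G).map (Int.cast : ℤ → ℚ))).det := by
    rw [← walkMat_map_intCast, ← Int.cast_det]
    exact isUnit_iff_ne_zero.mpr (Int.cast_ne_zero.mpr hcon)
  have hformula : ∀ Q : Matrix (Fin n) (Fin n) ℚ,
      (Qᵀ * Q = 1 ∧ Q *ᵥ 1 = 1 ∧
        Qᵀ * (adjMat G).map (Int.cast : ℤ → ℚ) * Q = (adjMat H).map (Int.cast : ℤ → ℚ)) →
      Qᵀ = (walkMat H).map (Int.cast : ℤ → ℚ) * ((walkMat G).map (Int.cast : ℤ → ℚ))⁻¹ := by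
    rintro Q ⟨hQ, he, hAB⟩
    rw [walkMat_map_intCast, walkMat_map_intCast]
    exact transpose_eq_walkMatrix_mul_inv hW hQ he hAB
  refine ⟨genCospectral_iff_charpoly_map_intCast G H |>.trans ⟨fun ⟨h, hJ⟩ => ?_, ?_⟩,
    fun Q hQ => ⟨hformula Q hQ, fun Q' hQ' => transpose_injective ?_⟩⟩
  · exact exists_regular_orthogonal_of_charpoly_eq (transpose_adjMat_map_intCast G)
      (transpose_adjMat_map_intCast H) hW h hJ
  · rintro ⟨Q, hQ, he, hAB⟩
    exact charpoly_eq_of_regular_orthogonal hQ he hAB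
  · rw [hformula Q hQ, hformula Q' hQ']
end

section
/- (Exclusion Condition) Let G be a controllable graph on n vertices and p an odd prime such that the walk matrix W = W(G) has rank n−1 over F_p. Let z_0 ∈ ℤ^n be a solution of W^T z ≡ 0 (mod p) with z_0 ≢ 0 (mod p). If z_0^T z_0 ≢ 0 (mod p), then p ∤ ℓ(Q) for every Q ∈ Q(G). -/
open Polynomial Matrix BigOperators

/-- The level ℓ(Q) of a rational matrix: the smallest positive integer k with kQ integral. -/
noncomputable def level {n : ℕ} (Q : Matrix (Fin n) (Fin n) ℚ) : ℕ :=
  sInf {k : ℕ | 0 < k ∧ ∀ i j, ((k : ℚ) * Q i j).den = 1}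

/-- The set Q(G) of regular rational orthogonal matrices Q such that QᵀA(G)Q is a
(0,1)-matrix. -/
def QSet {n : ℕ} (G : SimpleGraph (Fin n)) [DecidableRel G.Adj] :
    Set (Matrix (Fin n) (Fin n) ℚ) :=
  {Q | Qᵀ * Q = 1 ∧ (Q *ᵥ fun _ => (1 : ℚ)) = (fun _ => 1) ∧
    ∀ i j, (Qᵀ * (adjMat G).map (Int.cast : ℤ → ℚ) * Q) i j = 0 ∨
           (Qᵀ * (adjMat G).map (Int.cast : ℤ → ℚ) * Q) i j = 1}


section ExclusionAux

lemma den_mul_cast' (q : ℚ) (k : ℕ) (h : q.den ∣ k) : ((k:ℚ)*q).den = 1 := by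
  obtain ⟨c, rfl⟩ := h
  have hden : ((q.den : ℚ)) ≠ 0 := by exact_mod_cast q.den_nz
  have h1 : ((q.den : ℚ)) * q = q.num := by
    nth_rewrite 2 [← Rat.num_div_den q]
    rw [mul_div_cancel₀ _ hden]
  have h2 : ((q.den * c : ℕ) : ℚ) * q = ((c * q.num : ℤ) : ℚ) := by
    push_cast
    rw [mul_comm (q.den : ℚ) (c:ℚ), mul_assoc, h1]
  rw [h2, Rat.den_intCast]

end ExclusionAux

/-- **Lemma (Exclusion Condition).** Let G be controllable and p an odd prime with
rank_p W = n - 1.  If z₀ ∈ ℤⁿ is a nontrivial (mod p) solution of Wᵀz ≡ 0 (mod p) and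
z₀ᵀz₀ ≢ 0 (mod p), then p ∤ ℓ(Q) for every Q ∈ Q(G). -/
theorem exclusion_condition {n : ℕ} (G : SimpleGraph (Fin n)) [DecidableRel G.Adj]
    (hcon : (walkMat G).det ≠ 0) (p : ℕ) (hp : p.Prime) (hpodd : Odd p)
    (hrank : ((walkMat G).map (Int.cast : ℤ → ZMod p)).rank = n - 1)
    (z₀ : Fin n → ℤ)
    (hsol : ((walkMat G)ᵀ.map (Int.cast : ℤ → ZMod p)) *ᵥ (fun i => ((z₀ i : ZMod p))) = 0)
    (hz₀ : (fun i => ((z₀ i : ZMod p))) ≠ (0 : Fin n → ZMod p))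
    (hiso : ¬ (p : ℤ) ∣ z₀ ⬝ᵥ z₀) :
    ∀ Q ∈ QSet G, ¬ p ∣ level Q := by
  -- trivial case n = 0
  rcases Nat.eq_zero_or_pos n with hn0 | hn
  · subst hn0
    exact absurd (_root_.funext fun i => i.elim0) hz₀
  intro Q hQ hdvd
  obtain ⟨hQ1, hQe, hQ01⟩ := hQ
  -- basic properties of the level ℓ
  have hlmem : 0 < level Q ∧ ∀ i j, ((level Q : ℚ) * Q i j).den = 1 := by
    have hne : {k : ℕ | 0 < k ∧ ∀ i j, ((k : ℚ) * Q i j).den = 1}.Nonempty := by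
      refine ⟨∏ i : Fin n, ∏ j : Fin n, (Q i j).den, ?_, fun i j => ?_⟩
      · exact Finset.prod_pos fun i _ => Finset.prod_pos fun j _ => (Q i j).pos
      · apply den_mul_cast'
        calc (Q i j).den ∣ ∏ j' : Fin n, (Q i j').den :=
              Finset.dvd_prod_of_mem _ (Finset.mem_univ j)
          _ ∣ ∏ i' : Fin n, ∏ j' : Fin n, (Q i' j').den :=
              Finset.dvd_prod_of_mem (fun i' => ∏ j' : Fin n, (Q i' j').den) (Finset.mem_univ i)
    exact Nat.sInf_mem hne
  set ℓ := level Q with hℓdef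
  obtain ⟨hℓpos, hℓden⟩ := hlmem
  -- the integral matrix Z = ℓ • Q
  set Z : Matrix (Fin n) (Fin n) ℤ := Matrix.of fun i j => ((ℓ:ℚ) * Q i j).num with hZdef
  have hZmap : Z.map (Int.cast : ℤ → ℚ) = (ℓ:ℚ) • Q := by
    ext i j
    simp only [hZdef, Matrix.map_apply, Matrix.of_apply, Matrix.smul_apply, smul_eq_mul]
    exact Rat.coe_int_num_of_den_eq_one (hℓden i j)
  have hZent : ∀ i j, ((Z i j : ℤ) : ℚ) = (ℓ:ℚ) * Q i j := by
    intro i j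
    have := congrFun (congrFun hZmap i) j
    simpa [Matrix.map_apply, Matrix.smul_apply, smul_eq_mul] using this
  set Aq := (adjMat G).map (Int.cast : ℤ → ℚ) with hAqdef
  -- the integral matrix B with B = Qᵀ A Q
  set Bz : Matrix (Fin n) (Fin n) ℤ :=
    Matrix.of fun i j => if (Qᵀ * Aq * Q) i j = 1 then 1 else 0 with hBzdef
  have hB : Bz.map (Int.cast : ℤ → ℚ) = Qᵀ * Aq * Q := by
    ext i j
    rcases hQ01 i j with h | h <;>
      simp [hBzdef, Matrix.map_apply, h]
  have hQQt : Q * Qᵀ = 1 := mul_eq_one_comm.mp hQ1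
  -- powers
  have hpow : ∀ k : ℕ, Qᵀ * Aq ^ k * Q = (Bz.map (Int.cast : ℤ → ℚ)) ^ k := by
    intro k
    induction k with
    | zero => simpa [pow_zero, Matrix.mul_one] using hQ1
    | succ k ih =>
      rw [pow_succ, pow_succ, ← ih, hB]
      rw [show Qᵀ * Aq ^ k * Q * (Qᵀ * Aq * Q)
            = Qᵀ * Aq ^ k * (Q * Qᵀ) * (Aq * Q) by simp only [Matrix.mul_assoc],
          hQQt, Matrix.mul_one]
      simp only [Matrix.mul_assoc]
  -- e vector
  set e : Fin n → ℚ := fun _ => 1 with hedef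
  have hQte : Qᵀ *ᵥ e = e := by
    have h := congrArg (fun v => Qᵀ *ᵥ v) hQe
    simpa [Matrix.mulVec_mulVec, hQ1, Matrix.one_mulVec] using h.symm
  -- walk matrix over ℚ
  set Wq := (walkMat G).map (Int.cast : ℤ → ℚ) with hWqdef
  have hAqpow : ∀ k : ℕ, ((adjMat G) ^ k).map (Int.cast : ℤ → ℚ) = Aq ^ k := by
    intro k
    have := map_pow ((Int.castRingHom ℚ).mapMatrix) (adjMat G) k
    simpa [RingHom.mapMatrix_apply] using this
  have hWq : ∀ i j, Wq i j = ((Aq ^ (j:ℕ)) *ᵥ e) i := by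
    intro i j
    have h := RingHom.map_mulVec (Int.castRingHom ℚ) ((adjMat G) ^ (j:ℕ)) (fun _ => 1) i
    simp only [hWqdef, Matrix.map_apply, walkMat, Matrix.of_apply]
    rw [show ((Int.castRingHom ℚ) : ℤ → ℚ) = (Int.cast : ℤ → ℚ) from rfl] at h
    rw [h, hAqpow]
    congr 1
  -- integral walk matrix of B
  set WB : Matrix (Fin n) (Fin n) ℤ :=
    Matrix.of (fun i j => ((Bz ^ (j:ℕ)) *ᵥ fun _ => (1:ℤ)) i) with hWBdef
  have hWBq : ∀ i j, (WB.map (Int.cast : ℤ → ℚ)) i j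
      = (((Bz.map (Int.cast : ℤ → ℚ)) ^ (j:ℕ)) *ᵥ e) i := by
    intro i j
    have h := RingHom.map_mulVec (Int.castRingHom ℚ) (Bz ^ (j:ℕ)) (fun _ => 1) i
    have hBpow : (Bz ^ (j:ℕ)).map (Int.cast : ℤ → ℚ) = (Bz.map (Int.cast : ℤ → ℚ)) ^ (j:ℕ) := by
      have := map_pow ((Int.castRingHom ℚ).mapMatrix) Bz (j:ℕ)
      simpa [RingHom.mapMatrix_apply] using this
    simp only [Matrix.map_apply]
    rw [show ((Int.castRingHom ℚ) : ℤ → ℚ) = (Int.cast : ℤ → ℚ) from rfl] at h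
    rw [hWBdef]
    simp only [Matrix.of_apply]
    rw [h, hBpow]
    congr 1
  -- key: Qᵀ * Wq = WB over ℚ
  have hkey : Qᵀ * Wq = WB.map (Int.cast : ℤ → ℚ) := by
    ext i j
    calc (Qᵀ * Wq) i j = ∑ k, Qᵀ i k * Wq k j := Matrix.mul_apply
      _ = ∑ k, Qᵀ i k * ((Aq ^ (j:ℕ)) *ᵥ e) k :=
          Finset.sum_congr rfl fun k _ => by rw [hWq k j]
      _ = (Qᵀ *ᵥ ((Aq ^ (j:ℕ)) *ᵥ e)) i := rfl
      _ = ((Qᵀ * Aq ^ (j:ℕ)) *ᵥ e) i := by rw [Matrix.mulVec_mulVec]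
      _ = ((Qᵀ * Aq ^ (j:ℕ)) *ᵥ (Q *ᵥ e)) i := by rw [hQe]
      _ = ((Qᵀ * Aq ^ (j:ℕ) * Q) *ᵥ e) i := by rw [Matrix.mulVec_mulVec]
      _ = (((Bz.map (Int.cast : ℤ → ℚ)) ^ (j:ℕ)) *ᵥ e) i := by rw [hpow (j:ℕ)]
      _ = (WB.map (Int.cast : ℤ → ℚ)) i j := (hWBq i j).symm
  -- Zᵀ * W = ℓ • WB over ℤ
  have hZW : Zᵀ * (walkMat G) = (ℓ : ℤ) • WB := by
    have hcast : ∀ i j, (((Zᵀ * (walkMat G)) i j : ℤ) : ℚ) = (((ℓ : ℤ) • WB) i j : ℤ) := by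
      intro i j
      have h1 : (((Zᵀ * (walkMat G)) i j : ℤ) : ℚ) = ((Z.map (Int.cast : ℤ → ℚ))ᵀ * Wq) i j := by
        simp only [Matrix.mul_apply, Matrix.transpose_apply, Matrix.map_apply, hWqdef]
        push_cast
        rfl
      have h2 := congrFun (congrFun hkey i) j
      rw [h1, hZmap, Matrix.transpose_smul, Matrix.smul_mul]
      simp only [Matrix.smul_apply, smul_eq_mul]
      rw [h2]
      simp [Matrix.smul_apply, smul_eq_mul]
    ext i j
    exact_mod_cast hcast i j
  -- mod p
  haveI : Fact p.Prime := ⟨hp⟩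
  set Zp : Matrix (Fin n) (Fin n) (ZMod p) := Z.map (Int.cast : ℤ → ZMod p) with hZpdef
  set Wp := ((walkMat G)ᵀ).map (Int.cast : ℤ → ZMod p) with hWpdef
  have hWZ : (walkMat G)ᵀ * Z = (ℓ:ℤ) • WBᵀ := by
    have h := congrArg Matrix.transpose hZW
    rw [Matrix.transpose_mul, Matrix.transpose_transpose, Matrix.transpose_smul] at h
    exact h
  have hℓpn : ((ℓ : ℕ) : ZMod p) = 0 := (ZMod.natCast_eq_zero_iff ℓ p).mpr hdvd
  have hℓp : ((ℓ : ℤ) : ZMod p) = 0 := by push_cast; exact hℓpn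
  -- columns of Zp are in the kernel of Wp
  have hcolker : ∀ j, Wp *ᵥ (fun i => Zp i j) = 0 := by
    intro j
    funext i
    have h1 : (Wp *ᵥ fun k => Zp k j) i = ((((walkMat G)ᵀ * Z) i j : ℤ) : ZMod p) := by
      simp only [Matrix.mulVec, dotProduct, Matrix.mul_apply, Matrix.map_apply,
        hWpdef, hZpdef]
      push_cast
      rfl
    rw [h1, hWZ]
    simp only [Matrix.smul_apply, smul_eq_mul, Pi.zero_apply]
    push_cast
    rw [hℓpn, zero_mul]
  -- the kernel has dimension 1
  set K := LinearMap.ker (Matrix.mulVecLin Wp) with hKdef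
  have hWpT : Wp = ((walkMat G).map (Int.cast : ℤ → ZMod p))ᵀ := by
    rw [hWpdef, Matrix.transpose_map]
  have hker1 : Module.finrank (ZMod p) K = 1 := by
    have h := LinearMap.finrank_range_add_finrank_ker (Matrix.mulVecLin Wp)
    have hpi : Module.finrank (ZMod p) (Fin n → ZMod p) = n := by
      simp [Module.finrank_pi]
    have hr : Module.finrank (ZMod p) (LinearMap.range (Matrix.mulVecLin Wp)) = n - 1 := by
      have : Wp.rank = n - 1 := by rw [hWpT, Matrix.rank_transpose, hrank]
      exact this
    rw [hpi, hr] at h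
    rw [hKdef]
    omega
  set z₀p : Fin n → ZMod p := fun i => ((z₀ i : ZMod p)) with hz₀pdef
  have hz₀mem : z₀p ∈ K := by
    rw [hKdef, LinearMap.mem_ker, Matrix.mulVecLin_apply]
    exact hsol
  have hspan : Submodule.span (ZMod p) {z₀p} = K := by
    apply Submodule.eq_of_le_of_finrank_le
    · rw [Submodule.span_le, Set.singleton_subset_iff]
      exact hz₀mem
    · rw [hker1, finrank_span_singleton hz₀]
  -- each column of Zp is a multiple of z₀p
  have hcols : ∀ j, ∃ c : ZMod p, (fun i => Zp i j) = c • z₀p := by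
    intro j
    have hmem : (fun i => Zp i j) ∈ K := by
      rw [hKdef, LinearMap.mem_ker, Matrix.mulVecLin_apply]
      exact hcolker j
    rw [← hspan, Submodule.mem_span_singleton] at hmem
    obtain ⟨c, hc⟩ := hmem
    exact ⟨c, hc.symm⟩
  choose c hc using hcols
  -- Zᵀ Z = ℓ² over ℤ
  have hZtZ : Zᵀ * Z = ((ℓ : ℤ) ^ 2) • 1 := by
    have hcast : ∀ i j, (((Zᵀ * Z) i j : ℤ) : ℚ) = ((((ℓ : ℤ) ^ 2) • (1 : Matrix (Fin n) (Fin n) ℤ)) i j : ℤ) := by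
      intro i j
      have h1 : (((Zᵀ * Z) i j : ℤ) : ℚ) = ((Z.map (Int.cast : ℤ → ℚ))ᵀ * (Z.map (Int.cast : ℤ → ℚ))) i j := by
        simp only [Matrix.mul_apply, Matrix.transpose_apply, Matrix.map_apply]
        push_cast
        rfl
      rw [h1, hZmap, Matrix.transpose_smul, Matrix.smul_mul, Matrix.mul_smul, hQ1]
      simp only [Matrix.smul_apply, smul_eq_mul, Matrix.one_apply]
      by_cases hij : i = j <;> simp [hij] <;> ring
    ext i j
    exact_mod_cast hcast i j
  -- z₀p ⬝ z₀p ≠ 0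
  have hdot : (z₀p ⬝ᵥ z₀p) ≠ 0 := by
    intro h
    apply hiso
    rw [← ZMod.intCast_zmod_eq_zero_iff_dvd]
    rw [show (((z₀ ⬝ᵥ z₀ : ℤ)) : ZMod p) = z₀p ⬝ᵥ z₀p by
      simp only [dotProduct, hz₀pdef]; push_cast; rfl]
    exact h
  -- all c j vanish
  have hc0 : ∀ j, c j = 0 := by
    intro j
    have hdiag : ∑ k, Zp k j * Zp k j = 0 := by
      have h1 : ∑ k, Zp k j * Zp k j = (((Zᵀ * Z) j j : ℤ) : ZMod p) := by
        simp only [Matrix.mul_apply, Matrix.transpose_apply, Matrix.map_apply, hZpdef]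
        push_cast
        rfl
      rw [h1, hZtZ]
      simp only [Matrix.smul_apply, smul_eq_mul, Matrix.one_apply_eq]
      push_cast
      rw [hℓpn]
      ring
    have h2 : ∑ k, Zp k j * Zp k j = c j ^ 2 * (z₀p ⬝ᵥ z₀p) := by
      have h3 : ∀ k, Zp k j = c j * z₀p k := fun k => by
        have := congrFun (hc j) k
        simpa [Pi.smul_apply, smul_eq_mul] using this
      simp only [h3, dotProduct, Finset.mul_sum]
      exact Finset.sum_congr rfl fun k _ => by ring
    rw [h2] at hdiag
    rcases mul_eq_zero.mp hdiag with h | h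
    · exact pow_eq_zero_iff (two_ne_zero) |>.mp h
    · exact absurd h hdot
  -- so Zp = 0, contradicting minimality of ℓ
  have hZp0 : ∀ i j, (p : ℤ) ∣ Z i j := by
    intro i j
    rw [← ZMod.intCast_zmod_eq_zero_iff_dvd]
    have := congrFun (hc j) i
    simp only [Pi.smul_apply, smul_eq_mul, hc0 j, zero_mul] at this
    simpa [hZpdef, Matrix.map_apply] using this
  -- ℓ/p is a smaller valid denominator bound
  obtain ⟨m, hm⟩ := hdvd
  have hmpos : 0 < m := by
    rcases Nat.eq_zero_or_pos m with h | h
    · rw [h, mul_zero] at hm; omega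
    · exact h
  have hmmem : m ∈ {k : ℕ | 0 < k ∧ ∀ i j, ((k : ℚ) * Q i j).den = 1} := by
    refine ⟨hmpos, fun i j => ?_⟩
    obtain ⟨t, ht⟩ := hZp0 i j
    have hp0 : ((p : ℚ)) ≠ 0 := by
      exact_mod_cast hp.ne_zero
    have heq : (m : ℚ) * Q i j = (t : ℚ) := by
      have h1 : ((ℓ : ℕ) : ℚ) * Q i j = ((p : ℚ)) * t := by
        rw [← hZent i j, ht]
        push_cast
        ring
      rw [hm] at h1
      push_cast at h1
      have h2 : (p : ℚ) * ((m : ℚ) * Q i j) = (p:ℚ) * (t : ℚ) := by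
        rw [← h1]; ring
      exact mul_left_cancel₀ hp0 h2
    rw [heq, Rat.den_intCast]
  have hle : ℓ ≤ m := Nat.sInf_le hmmem
  have hlt : m < ℓ := by
    have hp2 : 2 ≤ p := hp.two_le
    calc m < p * m := by nlinarith
      _ = ℓ := hm.symm
  omega
end

section
/- Let G be a graph on n vertices with adjacency matrix A, let Q ∈ Q(G) have level ℓ = ℓ(Q), let p be an odd prime dividing ℓ, and set Q̂ = ℓ·Q (an integral matrix). Then the column space of Q̂ over F_p is a nonzero, totally isotropic subspace of F_p^n that is invariant under the mod-p reduction of A and under the mod-p reduction of A+J, where J is the all-ones matrix. -/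
open Polynomial Matrix BigOperators

/-- ℓ(Q)·Q as an integral matrix (each entry of ℓ(Q)·Q has denominator 1; we take numerators). -/
noncomputable def intScale {n : ℕ} (Q : Matrix (Fin n) (Fin n) ℚ) : Matrix (Fin n) (Fin n) ℤ :=
  Matrix.of fun i j => ((level Q : ℚ) * Q i j).num

/-- The column space, over F_p, of (the mod-p reduction of) an integral matrix. -/
noncomputable def colSpaceP (p : ℕ) {n : ℕ} (M : Matrix (Fin n) (Fin n) ℤ) :
    Submodule (ZMod p) (Fin n → ZMod p) :=
  LinearMap.range (Matrix.toLin' (M.map (Int.cast : ℤ → ZMod p)))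


section Aux

lemma den_one_of_den_dvd (q : ℚ) (k : ℕ) (h : (q.den : ℤ) ∣ (k : ℤ)) :
    ((k : ℚ) * q).den = 1 := by
  obtain ⟨c, hc⟩ := h
  have hden : q * ((q.den : ℚ)) = (q.num : ℚ) := Rat.mul_den_eq_num q
  have h2 : ((k : ℚ)) * q = ((c * q.num : ℤ) : ℚ) := by
    have h1 : ((k : ℕ) : ℚ) = (q.den : ℚ) * (c : ℚ) := by
      exact_mod_cast congrArg (Int.cast : ℤ → ℚ) hc
    push_cast
    rw [h1, ← hden]; ring
  rw [h2]; exact Rat.den_intCast _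

lemma level_spec {n : ℕ} (Q : Matrix (Fin n) (Fin n) ℚ) :
    0 < level Q ∧ ∀ i j, ((level Q : ℚ) * Q i j).den = 1 := by
  have hne : {k : ℕ | 0 < k ∧ ∀ i j, ((k : ℚ) * Q i j).den = 1}.Nonempty := by
    refine ⟨∏ i : Fin n, ∏ j : Fin n, (Q i j).den, ?_, ?_⟩
    · exact Finset.prod_pos fun i _ => Finset.prod_pos fun j _ => (Q i j).pos
    · intro i j
      refine den_one_of_den_dvd _ _ ?_
      have : (Q i j).den ∣ ∏ i : Fin n, ∏ j : Fin n, (Q i j).den :=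
        dvd_trans (Finset.dvd_prod_of_mem (fun j => (Q i j).den) (Finset.mem_univ j))
          (Finset.dvd_prod_of_mem (fun i => ∏ j : Fin n, (Q i j).den) (Finset.mem_univ i))
      exact_mod_cast this
  exact Nat.sInf_mem hne

lemma intScale_cast {n : ℕ} (Q : Matrix (Fin n) (Fin n) ℚ) (i j : Fin n) :
    ((intScale Q i j : ℤ) : ℚ) = (level Q : ℚ) * Q i j := by
  have := (level_spec Q).2 i j
  simpa [intScale] using (Rat.den_eq_one_iff _).mp this

lemma intScale_map {n : ℕ} (Q : Matrix (Fin n) (Fin n) ℚ) :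
    (intScale Q).map (Int.cast : ℤ → ℚ) = (level Q : ℚ) • Q := by
  ext i j
  simp [Matrix.map_apply, intScale_cast]

end Aux


section Aux2

lemma int_matrix_cast_inj {n : ℕ} {M N : Matrix (Fin n) (Fin n) ℤ}
    (h : M.map (Int.cast : ℤ → ℚ) = N.map (Int.cast : ℤ → ℚ)) : M = N := by
  ext i j
  have := congrFun (congrFun h i) j
  simpa [Matrix.map_apply] using this

lemma map_mulQ {n : ℕ} (M N : Matrix (Fin n) (Fin n) ℤ) :
    (M * N).map (Int.cast : ℤ → ℚ) = M.map Int.cast * N.map Int.cast := by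
  ext i j
  simp [Matrix.mul_apply, Matrix.map_apply]

lemma map_mulP (p : ℕ) {n : ℕ} (M N : Matrix (Fin n) (Fin n) ℤ) :
    (M * N).map (Int.cast : ℤ → ZMod p) = M.map Int.cast * N.map Int.cast := by
  ext i j
  simp [Matrix.mul_apply, Matrix.map_apply]

end Aux2

/-- **Lemma.** Let Q ∈ Q(G) have level ℓ, let p be an odd prime dividing ℓ, and Q̂ = ℓ·Q.
Then the column space of Q̂ over F_p is nonzero, totally isotropic, and invariant under
(the mod-p reductions of) A and A+J. -/
theorem colSpace_nonzero_isotropic_invariant {n : ℕ} (G : SimpleGraph (Fin n))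
    [DecidableRel G.Adj] (Q : Matrix (Fin n) (Fin n) ℚ) (hQ : Q ∈ QSet G)
    (p : ℕ) (hp : p.Prime) (hpodd : Odd p) (hpl : p ∣ level Q) :
    colSpaceP p (intScale Q) ≠ ⊥ ∧
    (∀ u ∈ colSpaceP p (intScale Q), ∀ v ∈ colSpaceP p (intScale Q), u ⬝ᵥ v = 0) ∧
    (∀ x ∈ colSpaceP p (intScale Q),
      ((adjMat G).map (Int.cast : ℤ → ZMod p)) *ᵥ x ∈ colSpaceP p (intScale Q)) ∧
    (∀ x ∈ colSpaceP p (intScale Q),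
      ((adjMat G + Jmat n).map (Int.cast : ℤ → ZMod p)) *ᵥ x ∈ colSpaceP p (intScale Q)) := by
  classical
  obtain ⟨hortho, hreg, hB01⟩ := hQ
  obtain ⟨hlpos, hden⟩ := level_spec Q
  set L := level Q with hL
  set Qh := intScale Q with hQhdef
  have hmap : Qh.map (Int.cast : ℤ → ℚ) = (L : ℚ) • Q := intScale_map Q
  have hortho' : Q * Qᵀ = 1 := mul_eq_one_comm.mp hortho
  set Aq := (adjMat G).map (Int.cast : ℤ → ℚ) with hAqdef
  set Jq := (Jmat n).map (Int.cast : ℤ → ℚ) with hJqdef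
  -- J over ℚ
  have hQJ : Q * Jq = Jq := by
    ext i j
    have := congrFun hreg i
    simp only [Matrix.mulVec, dotProduct, mul_one] at this
    simp [Matrix.mul_apply, hJqdef, Jmat, Matrix.map_apply, this]
  have hcols : Qᵀ *ᵥ (fun _ => (1 : ℚ)) = fun _ => 1 := by
    conv_lhs => rw [← hreg]
    rw [Matrix.mulVec_mulVec, hortho, Matrix.one_mulVec]
  have hJQ : Jq * Q = Jq := by
    ext i j
    have := congrFun hcols j
    simp only [Matrix.mulVec, dotProduct, Matrix.transpose_apply, mul_one] at this
    simp [Matrix.mul_apply, hJqdef, Jmat, Matrix.map_apply, this]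
  -- integral B
  set Bint : Matrix (Fin n) (Fin n) ℤ :=
    Matrix.of (fun i j => if (Qᵀ * Aq * Q) i j = 1 then 1 else 0) with hBintdef
  have hBcast : Bint.map (Int.cast : ℤ → ℚ) = Qᵀ * Aq * Q := by
    ext i j
    rcases hB01 i j with h | h <;> simp [hBintdef, Matrix.map_apply, h]
  -- A Q = Q B over ℚ
  have hAQ : Aq * Q = Q * (Qᵀ * Aq * Q) := by
    rw [← Matrix.mul_assoc, ← Matrix.mul_assoc, hortho', Matrix.one_mul]
  -- integral identity 1 : Qhᵀ Qh = L² • 1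
  have hI1 : Qhᵀ * Qh = ((L : ℤ) * L) • (1 : Matrix (Fin n) (Fin n) ℤ) := by
    apply int_matrix_cast_inj
    rw [map_mulQ, Matrix.transpose_map, hmap]
    have hR : (((L : ℤ) * L) • (1 : Matrix (Fin n) (Fin n) ℤ)).map (Int.cast : ℤ → ℚ)
        = ((L : ℚ) * L) • (1 : Matrix (Fin n) (Fin n) ℚ) := by
      ext i j
      rw [Matrix.map_apply, Matrix.smul_apply, Matrix.smul_apply, Matrix.one_apply,
        Matrix.one_apply, smul_eq_mul, smul_eq_mul]
      split_ifs <;> push_cast <;> ring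
    rw [hR, Matrix.transpose_smul, Matrix.smul_mul, Matrix.mul_smul, hortho, smul_smul]
  -- integral identity 2 : A Qh = Qh Bint
  have hI2 : adjMat G * Qh = Qh * Bint := by
    apply int_matrix_cast_inj
    rw [map_mulQ, map_mulQ, hmap, hBcast, ← hAqdef, Matrix.mul_smul, Matrix.smul_mul, hAQ]
  -- integral identity 3 : (A + J) Qh = Qh (Bint + J)
  have hI3 : (adjMat G + Jmat n) * Qh = Qh * (Bint + Jmat n) := by
    apply int_matrix_cast_inj
    rw [map_mulQ, map_mulQ]
    have hAJ : (adjMat G + Jmat n).map (Int.cast : ℤ → ℚ) = Aq + Jq := by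
      ext i j; simp [Matrix.map_apply, hAqdef, hJqdef]
    have hBJ : (Bint + Jmat n).map (Int.cast : ℤ → ℚ) = Qᵀ * Aq * Q + Jq := by
      ext i j
      have h1 := congrFun (congrFun hBcast i) j
      simp only [Matrix.map_apply, Matrix.add_apply] at h1 ⊢
      push_cast
      rw [h1]
      simp [hJqdef, Jmat, Matrix.map_apply]
    rw [hAJ, hBJ, hmap, Matrix.add_mul, Matrix.mul_add, Matrix.mul_smul, Matrix.smul_mul,
      Matrix.smul_mul, Matrix.mul_smul, hAQ, hQJ, hJQ]
  -- mod p
  set M := Qh.map (Int.cast : ℤ → ZMod p) with hMdef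
  have hmem : ∀ x, x ∈ colSpaceP p Qh ↔ ∃ y, M *ᵥ y = x := by
    intro x
    constructor
    · rintro ⟨y, rfl⟩; exact ⟨y, (Matrix.toLin'_apply _ _).symm⟩
    · rintro ⟨y, rfl⟩; exact ⟨y, Matrix.toLin'_apply _ _⟩
  have hLp : ((L : ℤ) : ZMod p) = 0 := by
    rw [ZMod.intCast_zmod_eq_zero_iff_dvd]
    exact_mod_cast Int.natCast_dvd_natCast.mpr hpl
  refine ⟨?_, ?_, ?_, ?_⟩
  · -- nonzero
    intro hbot
    have hM0 : ∀ i j, (p : ℤ) ∣ Qh i j := by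
      intro i j
      have hcol : M *ᵥ (Pi.single j 1) ∈ colSpaceP p Qh :=
        (hmem _).mpr ⟨Pi.single j 1, rfl⟩
      rw [hbot, Submodule.mem_bot] at hcol
      have h0 : M i j = 0 := by
        have := congrFun hcol i
        simpa [Matrix.mulVec_single] using this
      rw [← ZMod.intCast_zmod_eq_zero_iff_dvd]
      simpa [hMdef, Matrix.map_apply] using h0
    obtain ⟨k, hk⟩ := hpl
    have hkpos : 0 < k := by
      rcases Nat.eq_zero_or_pos k with h | h
      · rw [h, Nat.mul_zero] at hk; omega
      · exact h
    have hkmem : k ∈ {k : ℕ | 0 < k ∧ ∀ i j, ((k : ℚ) * Q i j).den = 1} := by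
      refine ⟨hkpos, fun i j => ?_⟩
      obtain ⟨c, hc⟩ := hM0 i j
      have h1 : (L : ℚ) * Q i j = (p : ℚ) * (c : ℚ) := by
        rw [hL, ← intScale_cast Q i j]
        exact_mod_cast congrArg (Int.cast : ℤ → ℚ) hc
      have h2 : (k : ℚ) * Q i j = (c : ℚ) := by
        have hp0 : (p : ℚ) ≠ 0 := Nat.cast_ne_zero.mpr hp.pos.ne'
        have h3 : (p : ℚ) * ((k : ℚ) * Q i j) = (p : ℚ) * (c : ℚ) := by
          rw [← mul_assoc, ← Nat.cast_mul, ← hk]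
          exact h1
        exact mul_left_cancel₀ hp0 h3
      rw [h2]
      exact Rat.den_intCast c
    have hle : L ≤ k := Nat.sInf_le hkmem
    have hlt : k < L := by
      rw [hk]
      exact lt_mul_of_one_lt_left hkpos hp.one_lt
    omega
  · -- isotropic
    intro u hu v hv
    obtain ⟨x, rfl⟩ := (hmem u).mp hu
    obtain ⟨y, rfl⟩ := (hmem v).mp hv
    have hMtM : Mᵀ * M = 0 := by
      have := congrArg (fun N : Matrix (Fin n) (Fin n) ℤ =>
        N.map (Int.cast : ℤ → ZMod p)) hI1
      rw [map_mulP, Matrix.transpose_map] at this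
      rw [hMdef]
      rw [this]
      have hLp' : ((L : ℕ) : ZMod p) = 0 := (ZMod.natCast_eq_zero_iff L p).mpr hpl
      ext i j
      rw [Matrix.map_apply, Matrix.zero_apply, Matrix.smul_apply, Matrix.one_apply, smul_eq_mul]
      split_ifs <;> push_cast <;> simp [hLp']
    rw [Matrix.dotProduct_mulVec, ← Matrix.mulVec_transpose, Matrix.mulVec_mulVec, hMtM]
    simp
  · -- A-invariance
    intro x hx
    obtain ⟨y, rfl⟩ := (hmem x).mp hx
    have hAp := congrArg (fun N : Matrix (Fin n) (Fin n) ℤ =>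
      N.map (Int.cast : ℤ → ZMod p)) hI2
    rw [map_mulP, map_mulP] at hAp
    refine (hmem _).mpr ⟨(Bint.map (Int.cast : ℤ → ZMod p)) *ᵥ y, ?_⟩
    rw [Matrix.mulVec_mulVec, ← hAp, ← Matrix.mulVec_mulVec, hMdef]
  · -- (A+J)-invariance
    intro x hx
    obtain ⟨y, rfl⟩ := (hmem x).mp hx
    have hAp := congrArg (fun N : Matrix (Fin n) (Fin n) ℤ =>
      N.map (Int.cast : ℤ → ZMod p)) hI3
    rw [map_mulP, map_mulP] at hAp
    refine (hmem _).mpr ⟨((Bint + Jmat n).map (Int.cast : ℤ → ZMod p)) *ᵥ y, ?_⟩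
    rw [Matrix.mulVec_mulVec, ← hAp, ← Matrix.mulVec_mulVec, hMdef]
end
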